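/- arXiv:1604.07540 — 8 statements merged into one kernel-verified Lean document; each statement's English description precedes it below -/
import Mathlib

section
/- If a random assignment p admits a trading cycle, then p admits a trading cycle of size k ≤ n in which all k agents are distinct and all k objects are distinct. -/
open Finset
open scoped Classical

/-- A weak preference relation: complete (total) and transitive. -/
def IsPref {O : Type*} (R : O → O → Prop) : Prop :=
  Total R ∧ Transitive R

/-- A strict preference: a complete transitive relation that is antisymmetric
(no indifference between distinct objects). -/
def IsStrictPref {O : Type*} (R : O → O → Prop) : Prop :=
  IsPref R ∧ ∀ a b, R a b → R b a → a = b

/-- A random assignment: a doubly stochastic `n × n` matrix. -/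
def IsRandomAssignment {n : ℕ} (p : Fin n → Fin n → ℝ) : Prop :=
  (∀ i o, 0 ≤ p i o) ∧ (∀ i, ∑ o, p i o = 1) ∧ (∀ o, ∑ i, p i o = 1)

/-- An allocation: a probability vector over objects. -/
def IsAlloc {O : Type*} [Fintype O] (x : O → ℝ) : Prop :=
  (∀ o, 0 ≤ x o) ∧ ∑ o, x o = 1

/-- `x` weakly stochastically dominates `y` w.r.t. the weak preference `R`. -/
def SDge {O : Type*} [Fintype O] (R : O → O → Prop) (x y : O → ℝ) : Prop :=
  ∀ o : O, ∑ o' ∈ univ.filter (fun o' => R o' o), y o' ≤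
    ∑ o' ∈ univ.filter (fun o' => R o' o), x o'

/-- Strict stochastic dominance. -/
def SDgt {O : Type*} [Fintype O] (R : O → O → Prop) (x y : O → ℝ) : Prop :=
  SDge R x y ∧ ¬ SDge R y x

/-- A trading cycle of size `k` for the assignment `p` under the preference profile `R`:
agents `i 0, …, i (k-1)` and objects `o 0, …, o (k-1)` such that each agent `i j` owns a
positive fraction of `o j`, weakly prefers the next object `o (j+1 mod k)` to `o j`, and
some agent strictly prefers the next object. -/
def IsTradingCycle {n k : ℕ} (R : Fin n → Fin n → Fin n → Prop)
    (p : Fin n → Fin n → ℝ) (i : Fin k → Fin n) (o : Fin k → Fin n) : Prop :=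
  0 < k ∧ (∀ j, 0 < p (i j) (o j)) ∧ (∀ j, R (i j) (o (finRotate k j)) (o j)) ∧
    (∃ j, ¬ R (i j) (o j) (o (finRotate k j)))

def AdmitsTradingCycle {n : ℕ} (R : Fin n → Fin n → Fin n → Prop)
    (p : Fin n → Fin n → ℝ) : Prop :=
  ∃ (k : ℕ) (i : Fin k → Fin n) (o : Fin k → Fin n), IsTradingCycle R p i o

/-- SD-efficiency: no random assignment SD-dominates `p` for all agents, strictly for some. -/
def SDEfficient {n : ℕ} (R : Fin n → Fin n → Fin n → Prop) (p : Fin n → Fin n → ℝ) : Prop :=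
  ¬ ∃ q, IsRandomAssignment q ∧ (∀ i, SDge (R i) (q i) (p i)) ∧ ∃ i, SDgt (R i) (q i) (p i)

/-- The discrete (0-1) assignment associated with a permutation: agent `i` gets object `σ i`. -/
def permMatrix {n : ℕ} (σ : Equiv.Perm (Fin n)) : Fin n → Fin n → ℝ :=
  fun i o => if σ i = o then 1 else 0

/-- Pareto optimality of a discrete assignment. -/
def ParetoOptimalPerm {n : ℕ} (R : Fin n → Fin n → Fin n → Prop)
    (σ : Equiv.Perm (Fin n)) : Prop :=
  ¬ ∃ τ : Equiv.Perm (Fin n), (∀ i, R i (τ i) (σ i)) ∧ ∃ i, ¬ R i (σ i) (τ i)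

/-- Ex post efficiency: `p` is a convex combination of Pareto optimal discrete assignments. -/
def ExPostEfficient {n : ℕ} (R : Fin n → Fin n → Fin n → Prop)
    (p : Fin n → Fin n → ℝ) : Prop :=
  ∃ w : Equiv.Perm (Fin n) → ℝ, (∀ σ, 0 ≤ w σ) ∧ (∑ σ, w σ) = 1 ∧
    (∀ σ, w σ ≠ 0 → ParetoOptimalPerm R σ) ∧
    ∀ i o, p i o = ∑ σ, w σ * permMatrix σ i o

/-- One run of the simultaneous-eating algorithm, with `fuel` remaining steps.
At each step every agent eats her most preferred remaining object (w.r.t. her weak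
preference `R i`) at unit speed until some object is exhausted. -/
noncomputable def PSaux {n : ℕ} (R : Fin n → Fin n → Fin n → Prop) :
    ℕ → (Fin n → ℝ) → (Fin n → Fin n → ℝ) → (Fin n → Fin n → ℝ)
  | 0, _, alloc => alloc
  | fuel + 1, rem, alloc =>
    let A : Finset (Fin n) := univ.filter fun o => 0 < rem o
    if hA : A.Nonempty then
      let fav : Fin n → Fin n := fun i =>
        if h : ∃ o ∈ A, ∀ o' ∈ A, R i o o' then h.choose else hA.choose
      let eaters : Fin n → Finset (Fin n) := fun o => univ.filter fun i => fav i = o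
      let E : Finset (Fin n) := A.filter fun o => (eaters o).Nonempty
      if hE : E.Nonempty then
        let t : ℝ := (E.image fun o => rem o / (eaters o).card).min' (hE.image _)
        PSaux R fuel (fun o => if o ∈ E then rem o - t * (eaters o).card else rem o)
          (fun i o => alloc i o + if fav i = o then t else 0)
      else alloc
    else alloc

/-- The probabilistic serial rule (defined via the simultaneous eating algorithm;
for strict preference profiles this is the PS rule of Bogomolnaia and Moulin). -/
noncomputable def PS {n : ℕ} (R : Fin n → Fin n → Fin n → Prop) : Fin n → Fin n → ℝ :=
  PSaux R n (fun _ => 1) (fun _ _ => 0)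

/-- `f` extends PS: it coincides with PS on every strict preference profile. -/
def ExtendsPS {n : ℕ}
    (f : (Fin n → Fin n → Fin n → Prop) → Fin n → Fin n → ℝ) : Prop :=
  ∀ R, (∀ i, IsStrictPref (R i)) → f R = PS R

/-- `f` is weakly SD-strategyproof: no agent's misreport yields an allocation strictly
SD-dominating her truthful allocation w.r.t. her true preferences. -/
def WeakSDStrategyproof {n : ℕ}
    (f : (Fin n → Fin n → Fin n → Prop) → Fin n → Fin n → ℝ) : Prop :=
  ∀ R, (∀ i, IsPref (R i)) → ∀ (i : Fin n) (R' : Fin n → Fin n → Prop), IsPref R' →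
    ¬ SDgt (R i) (f (Function.update R i R') i) (f R i)

/-- `f` is ex post efficient (as a rule). -/
def ExPostEfficientRule {n : ℕ}
    (f : (Fin n → Fin n → Fin n → Prop) → Fin n → Fin n → ℝ) : Prop :=
  ∀ R, (∀ i, IsPref (R i)) → ExPostEfficient R (f R)

/-- The weak preference on `Fin 3` induced by a rank vector (lower rank = better). -/
def ofRank (r : Fin 3 → ℕ) : Fin 3 → Fin 3 → Prop := fun x y => r x ≤ r y

/-- Objects `a, b, c` are `0, 1, 2`. -/
def Pabc : Fin 3 → Fin 3 → Prop := ofRank ![0, 1, 2]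
def Pacb : Fin 3 → Fin 3 → Prop := ofRank ![0, 2, 1]
def Pbca : Fin 3 → Fin 3 → Prop := ofRank ![2, 0, 1]
def PabIndiff_c : Fin 3 → Fin 3 → Prop := ofRank ![0, 0, 1]

/-- ℕ-indexed version of a trading cycle, more convenient for surgery. -/
def Cyc {n : ℕ} (R : Fin n → Fin n → Fin n → Prop) (p : Fin n → Fin n → ℝ)
    (k : ℕ) (i o : ℕ → Fin n) : Prop :=
  0 < k ∧ (∀ j < k, 0 < p (i j) (o j)) ∧ (∀ j < k, R (i j) (o ((j + 1) % k)) (o j)) ∧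
    ∃ j < k, ¬ R (i j) (o j) (o ((j + 1) % k))

lemma modk_eq {k x : ℕ} (hk : 0 < k) (h2 : x < 2 * k) :
    x % k = if x < k then x else x - k := by
  split_ifs with h
  · exact Nat.mod_eq_of_lt h
  · rw [Nat.mod_eq_sub_mod (le_of_not_gt h)]
    exact Nat.mod_eq_of_lt (by omega)

lemma finRotate_val {m : ℕ} (j : Fin (m + 1)) :
    (finRotate (m + 1) j).val = (j.val + 1) % (m + 1) := by
  rw [finRotate_succ_apply, Fin.val_add, Fin.val_one', Nat.add_mod_mod]

/-- Rotating a cycle by `s` steps. -/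
lemma cyc_rot {n : ℕ} {R : Fin n → Fin n → Fin n → Prop} {p : Fin n → Fin n → ℝ}
    {k : ℕ} {i o : ℕ → Fin n} (h : Cyc R p k i o) (s : ℕ) (hs : s < k) :
    Cyc R p k (fun j => i ((j + s) % k)) (fun j => o ((j + s) % k)) := by
  obtain ⟨hk, hpos, hweak, j₀, hj₀, hstrict⟩ := h
  have key : ∀ j : ℕ, ((j + 1) % k + s) % k = ((j + s) % k + 1) % k := by
    intro j
    rw [Nat.mod_add_mod, Nat.mod_add_mod]
    ring_nf
  refine ⟨hk, ?_, ?_, ?_⟩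
  · intro j _
    exact hpos _ (Nat.mod_lt _ hk)
  · intro j _
    show R (i ((j + s) % k)) (o (((j + 1) % k + s) % k)) (o ((j + s) % k))
    rw [key j]
    exact hweak _ (Nat.mod_lt _ hk)
  · refine ⟨(j₀ + (k - s)) % k, Nat.mod_lt _ hk, ?_⟩
    have e1 : ((j₀ + (k - s)) % k + s) % k = j₀ := by
      rw [Nat.mod_add_mod]
      have : j₀ + (k - s) + s = j₀ + k := by omega
      rw [this, Nat.add_mod_right, Nat.mod_eq_of_lt hj₀]
    show ¬ R (i (((j₀ + (k - s)) % k + s) % k))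
        (o (((j₀ + (k - s)) % k + s) % k))
        (o ((((j₀ + (k - s)) % k + 1) % k + s) % k))
    rw [key, e1]
    exact hstrict

/-- Object surgery: if two positions share an object, there is a strictly shorter cycle. -/
lemma cyc_obj_split {n : ℕ} {R : Fin n → Fin n → Fin n → Prop} {p : Fin n → Fin n → ℝ}
    {k : ℕ} {i o : ℕ → Fin n} (hc : Cyc R p k i o)
    {a b : ℕ} (hab : a < b) (hbk : b < k) (hobj : o a = o b) :
    ∃ k', k' < k ∧ ∃ i' o' : ℕ → Fin n, Cyc R p k' i' o' := by
  have hk : 0 < k := hc.1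
  have hak : a < k := lt_trans hab hbk
  have hrot := cyc_rot hc a hak
  set i₁ : ℕ → Fin n := fun j => i ((j + a) % k) with hi₁
  set o₁ : ℕ → Fin n := fun j => o ((j + a) % k) with ho₁
  obtain ⟨-, hpos, hweak, j₁, hj₁, hstr⟩ := hrot
  set d := b - a with hd
  have hd0 : 0 < d := by omega
  have hdk : d < k := by omega
  have hoo : o₁ d = o₁ 0 := by
    show o ((d + a) % k) = o ((0 + a) % k)
    have e : d + a = b := by omega
    rw [e, Nat.mod_eq_of_lt hbk, Nat.zero_add, Nat.mod_eq_of_lt hak]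
    exact hobj.symm
  have htar : ∀ j, j < d → o₁ ((j + 1) % d) = o₁ ((j + 1) % k) := by
    intro j hj
    rcases Nat.lt_or_ge (j + 1) d with h | h
    · rw [Nat.mod_eq_of_lt h, Nat.mod_eq_of_lt (by omega)]
    · have hje : j + 1 = d := by omega
      rw [hje, Nat.mod_self, Nat.mod_eq_of_lt hdk, hoo]
  by_cases hcase : j₁ < d
  · refine ⟨d, hdk, i₁, o₁, hd0, fun j hj => hpos j (by omega), ?_, ⟨j₁, hcase, ?_⟩⟩
    · intro j hj
      show R (i₁ j) (o₁ ((j + 1) % d)) (o₁ j)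
      rw [htar j hj]
      exact hweak j (by omega)
    · show ¬ R (i₁ j₁) (o₁ j₁) (o₁ ((j₁ + 1) % d))
      rw [htar j₁ hcase]
      exact hstr
  · set m := k - d with hm
    have hm0 : 0 < m := by omega
    have hmk : m < k := by omega
    have htar2 : ∀ j, j < m → o₁ (d + ((j + 1) % m)) = o₁ ((d + j + 1) % k) := by
      intro j hj
      rcases Nat.lt_or_ge (j + 1) m with h | h
      · rw [Nat.mod_eq_of_lt h, Nat.mod_eq_of_lt (by omega), ← Nat.add_assoc]
      · have hje : j + 1 = m := by omega
        have e : d + j + 1 = k := by omega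
        rw [hje, Nat.mod_self, Nat.add_zero, e, Nat.mod_self, hoo]
    refine ⟨m, hmk, (fun j => i₁ (d + j)), (fun j => o₁ (d + j)), hm0,
      fun j hj => hpos (d + j) (by omega), ?_, ⟨j₁ - d, by omega, ?_⟩⟩
    · intro j hj
      show R (i₁ (d + j)) (o₁ (d + ((j + 1) % m))) (o₁ (d + j))
      rw [htar2 j hj]
      exact hweak (d + j) (by omega)
    · show ¬ R (i₁ (d + (j₁ - d))) (o₁ (d + (j₁ - d))) (o₁ (d + ((j₁ - d + 1) % m)))
      rw [htar2 _ (by omega)]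
      have e : d + (j₁ - d) = j₁ := by omega
      rw [e]
      exact hstr

/-- Agent surgery core: cycle with strictness at position `k-1` and a repeated agent. -/
lemma cyc_agent_core {n : ℕ} {R : Fin n → Fin n → Fin n → Prop} (hR : ∀ i, IsPref (R i))
    {p : Fin n → Fin n → ℝ} {k : ℕ} {i o : ℕ → Fin n}
    (hk : 0 < k) (hpos : ∀ j < k, 0 < p (i j) (o j))
    (hweak : ∀ j < k, R (i j) (o ((j + 1) % k)) (o j))
    (hK : ¬ R (i (k - 1)) (o (k - 1)) (o 0))
    {a b : ℕ} (hab : a < b) (hbk : b < k) (hiab : i a = i b) :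
    ∃ k', k' < k ∧ ∃ i' o' : ℕ → Fin n, Cyc R p k' i' o' := by
  have htrans := (hR (i a)).2
  by_cases h1 : R (i a) (o b) (o a)
  · -- use the long arc through position k-1
    set m := k - (b - a) with hm
    have hm0 : 0 < m := by omega
    have hmk : m < k := by omega
    have htar : ∀ j, j < m →
        (if (j + 1) % m = 0 then o a else o ((b + (j + 1) % m) % k)) = o ((b + j + 1) % k) := by
      intro j hj
      rcases Nat.lt_or_ge (j + 1) m with h | h
      · rw [Nat.mod_eq_of_lt h, if_neg (by omega), ← Nat.add_assoc]
      · have hje : j + 1 = m := by omega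
        have e : b + j + 1 = k + a := by omega
        rw [hje, Nat.mod_self, if_pos rfl, e, Nat.add_mod_left, Nat.mod_eq_of_lt (by omega)]
    refine ⟨m, hmk, (fun j => if j = 0 then i a else i ((b + j) % k)),
      (fun j => if j = 0 then o a else o ((b + j) % k)), hm0, ?_, ?_, ?_⟩
    · intro j hj
      by_cases hj0 : j = 0
      · subst hj0
        simp only [if_pos rfl]
        exact hpos a (by omega)
      · simp only [if_neg hj0]
        exact hpos _ (Nat.mod_lt _ hk)
    · intro j hj
      show R (if j = 0 then i a else i ((b + j) % k))
          (if (j + 1) % m = 0 then o a else o ((b + (j + 1) % m) % k))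
          (if j = 0 then o a else o ((b + j) % k))
      rw [htar j hj]
      by_cases hj0 : j = 0
      · subst hj0
        simp only [if_pos rfl]
        have hwb := hweak b hbk
        rw [← hiab] at hwb
        have := htrans hwb h1
        simpa using this
      · simp only [if_neg hj0]
        have hw := hweak ((b + j) % k) (Nat.mod_lt _ hk)
        rwa [Nat.mod_add_mod] at hw
    · by_cases hbk1 : b = k - 1
      · refine ⟨0, hm0, ?_⟩
        show ¬ R (if (0 : ℕ) = 0 then i a else i ((b + 0) % k))
            (if (0 : ℕ) = 0 then o a else o ((b + 0) % k))
            (if (0 + 1) % m = 0 then o a else o ((b + (0 + 1) % m) % k))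
        rw [htar 0 hm0]
        simp only [reduceIte]
        intro hcon
        have e0 : (b + 0 + 1) % k = 0 := by
          have e : b + 0 + 1 = k := by omega
          rw [e, Nat.mod_self]
        rw [e0] at hcon
        have hfin := htrans h1 hcon
        rw [hiab, hbk1] at hfin
        exact hK hfin
      · refine ⟨k - 1 - b, by omega, ?_⟩
        show ¬ R (if k - 1 - b = 0 then i a else i ((b + (k - 1 - b)) % k))
            (if k - 1 - b = 0 then o a else o ((b + (k - 1 - b)) % k))
            (if (k - 1 - b + 1) % m = 0 then o a else o ((b + (k - 1 - b + 1) % m) % k))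
        rw [htar _ (by omega)]
        rw [if_neg (by omega), if_neg (by omega)]
        have e1 : (b + (k - 1 - b)) % k = k - 1 := by
          have : b + (k - 1 - b) = k - 1 := by omega
          rw [this, Nat.mod_eq_of_lt (by omega)]
        have e2 : (b + (k - 1 - b) + 1) % k = 0 := by
          have : b + (k - 1 - b) + 1 = k := by omega
          rw [this, Nat.mod_self]
        rw [e1, e2]
        exact hK
  · -- use the short arc from a+1 to b
    have h2 : R (i a) (o a) (o b) := ((hR (i a)).1 (o b) (o a)).resolve_left h1
    set m := b - a with hm
    have hm0 : 0 < m := by omega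
    have htar : ∀ j, j < m →
        (if (j + 1) % m = 0 then o b else o (a + (j + 1) % m)) = o (a + j + 1) := by
      intro j hj
      rcases Nat.lt_or_ge (j + 1) m with h | h
      · rw [Nat.mod_eq_of_lt h, if_neg (by omega), ← Nat.add_assoc]
      · have hje : j + 1 = m := by omega
        rw [hje, Nat.mod_self, if_pos rfl]
        congr 1
        omega
    refine ⟨m, by omega, (fun j => if j = 0 then i b else i (a + j)),
      (fun j => if j = 0 then o b else o (a + j)), hm0, ?_, ?_, ⟨0, hm0, ?_⟩⟩
    · intro j hj
      by_cases hj0 : j = 0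
      · subst hj0
        simp only [if_pos rfl]
        exact hpos b hbk
      · simp only [if_neg hj0]
        exact hpos (a + j) (by omega)
    · intro j hj
      show R (if j = 0 then i b else i (a + j))
          (if (j + 1) % m = 0 then o b else o (a + (j + 1) % m))
          (if j = 0 then o b else o (a + j))
      rw [htar j hj]
      by_cases hj0 : j = 0
      · subst hj0
        simp only [if_pos rfl]
        have hwa := hweak a (by omega)
        rw [Nat.mod_eq_of_lt (by omega : a + 1 < k)] at hwa
        have := htrans hwa h2
        rw [hiab] at this
        simpa using this
      · simp only [if_neg hj0]
        have hw := hweak (a + j) (by omega)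
        rwa [Nat.mod_eq_of_lt (by omega : a + j + 1 < k)] at hw
    · show ¬ R (if (0 : ℕ) = 0 then i b else i (a + 0))
          (if (0 : ℕ) = 0 then o b else o (a + 0))
          (if (0 + 1) % m = 0 then o b else o (a + (0 + 1) % m))
      rw [htar 0 hm0]
      simp only [reduceIte]
      intro hcon
      rw [← hiab] at hcon
      have hwa := hweak a (by omega)
      rw [Nat.mod_eq_of_lt (by omega : a + 1 < k)] at hwa
      have hfin : R (i a) (o b) (o a) := htrans (by simpa using hcon) hwa
      exact h1 hfin

/-- Agent surgery: if the agents of a cycle are not all distinct, there is a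
strictly shorter cycle. -/
lemma cyc_agent_split {n : ℕ} {R : Fin n → Fin n → Fin n → Prop} (hR : ∀ i, IsPref (R i))
    {p : Fin n → Fin n → ℝ} {k : ℕ} {i o : ℕ → Fin n} (hc : Cyc R p k i o)
    (hdup : ¬ ∀ a, a < k → ∀ b, b < k → i a = i b → a = b) :
    ∃ k', k' < k ∧ ∃ i' o' : ℕ → Fin n, Cyc R p k' i' o' := by
  have hk : 0 < k := hc.1
  obtain ⟨-, -, -, j₀, hj₀, hstr₀⟩ := id hc
  set s := (j₀ + 1) % k with hs_def
  have hs : s < k := Nat.mod_lt _ hk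
  have hrot := cyc_rot hc s hs
  set i₁ : ℕ → Fin n := fun j => i ((j + s) % k) with hi₁
  set o₁ : ℕ → Fin n := fun j => o ((j + s) % k) with ho₁
  obtain ⟨-, hpos, hweak, -⟩ := hrot
  have ekey : (k - 1 + s) % k = j₀ := by
    rw [hs_def, Nat.add_comm (k - 1), Nat.mod_add_mod]
    have e : j₀ + 1 + (k - 1) = j₀ + k := by omega
    rw [e, Nat.add_mod_right, Nat.mod_eq_of_lt hj₀]
  have hK : ¬ R (i₁ (k - 1)) (o₁ (k - 1)) (o₁ 0) := by
    show ¬ R (i ((k - 1 + s) % k)) (o ((k - 1 + s) % k)) (o ((0 + s) % k))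
    rw [ekey, Nat.zero_add, Nat.mod_eq_of_lt hs]
    exact hstr₀
  push_neg at hdup
  obtain ⟨a₀, ha₀, b₀, hb₀, hiab, hne⟩ := hdup
  have hback : ∀ x, x < k → ((x + (k - s)) % k + s) % k = x := by
    intro x hx
    rw [Nat.mod_add_mod]
    have e : x + (k - s) + s = x + k := by omega
    rw [e, Nat.add_mod_right, Nat.mod_eq_of_lt hx]
  set a₁ := (a₀ + (k - s)) % k with ha₁def
  set b₁ := (b₀ + (k - s)) % k with hb₁def
  have ha₁ : a₁ < k := Nat.mod_lt _ hk
  have hb₁ : b₁ < k := Nat.mod_lt _ hk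
  have hia : i₁ a₁ = i a₀ := by
    show i ((a₁ + s) % k) = i a₀
    rw [ha₁def, hback a₀ ha₀]
  have hib : i₁ b₁ = i b₀ := by
    show i ((b₁ + s) % k) = i b₀
    rw [hb₁def, hback b₀ hb₀]
  have hi₁ab : i₁ a₁ = i₁ b₁ := by rw [hia, hib, hiab]
  have ea : (a₁ + s) % k = a₀ := by rw [ha₁def]; exact hback a₀ ha₀
  have eb : (b₁ + s) % k = b₀ := by rw [hb₁def]; exact hback b₀ hb₀
  have hne₁ : a₁ ≠ b₁ := fun hcon => hne (by rw [← ea, ← eb, hcon])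
  rcases Nat.lt_trichotomy a₁ b₁ with h | h | h
  · exact cyc_agent_core hR hk hpos hweak hK h hb₁ hi₁ab
  · exact absurd h hne₁
  · exact cyc_agent_core hR hk hpos hweak hK h ha₁ hi₁ab.symm

/-- Main shrinking lemma: any cycle contains a sub-cycle with distinct agents and
distinct objects. -/
lemma cyc_shrink {n : ℕ} {R : Fin n → Fin n → Fin n → Prop} (hR : ∀ i, IsPref (R i))
    {p : Fin n → Fin n → ℝ} :
    ∀ k, ∀ i o : ℕ → Fin n, Cyc R p k i o →
      ∃ k', k' ≤ k ∧ ∃ i' o' : ℕ → Fin n, Cyc R p k' i' o' ∧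
        (∀ a, a < k' → ∀ b, b < k' → i' a = i' b → a = b) ∧
        (∀ a, a < k' → ∀ b, b < k' → o' a = o' b → a = b) := by
  intro k
  induction k using Nat.strong_induction_on with
  | _ k IH =>
  intro i o hc
  by_cases ho : ∀ a, a < k → ∀ b, b < k → o a = o b → a = b
  · by_cases hi : ∀ a, a < k → ∀ b, b < k → i a = i b → a = b
    · exact ⟨k, le_rfl, i, o, hc, hi, ho⟩
    · -- agents repeat : agent surgery
      obtain ⟨k', hk'k, i', o', hc'⟩ := cyc_agent_split hR hc hi
      obtain ⟨k'', hle, res⟩ := IH k' hk'k i' o' hc'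
      exact ⟨k'', le_trans hle (le_of_lt hk'k), res⟩
  · -- objects repeat: object surgery
    push_neg at ho
    obtain ⟨a, ha, b, hb, hoab, hne⟩ := ho
    have hsplit : ∃ k', k' < k ∧ ∃ i' o' : ℕ → Fin n, Cyc R p k' i' o' := by
      rcases Nat.lt_trichotomy a b with h | h | h
      · exact cyc_obj_split hc h hb hoab
      · exact absurd h hne
      · exact cyc_obj_split hc h ha hoab.symm
    obtain ⟨k', hk'k, i', o', hc'⟩ := hsplit
    obtain ⟨k'', hle, res⟩ := IH k' hk'k i' o' hc'
    exact ⟨k'', le_trans hle (le_of_lt hk'k), res⟩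

theorem cyc_to_goal {n : ℕ} {R : Fin n → Fin n → Fin n → Prop}
    {p : Fin n → Fin n → ℝ} {k : ℕ} {i o : ℕ → Fin n} (hc : Cyc R p k i o)
    (hi : ∀ a, a < k → ∀ b, b < k → i a = i b → a = b)
    (ho : ∀ a, a < k → ∀ b, b < k → o a = o b → a = b) :
    k ≤ n ∧ ∃ (i' : Fin k → Fin n) (o' : Fin k → Fin n),
      Function.Injective i' ∧ Function.Injective o' ∧ IsTradingCycle R p i' o' := by
  obtain ⟨hk, hpos, hweak, j₀, hj₀, hstrict⟩ := hc
  obtain ⟨m, rfl⟩ := Nat.exists_eq_succ_of_ne_zero hk.ne'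
  set K := m + 1
  have hoinj : Function.Injective (fun j : Fin K => o j.val) := by
    intro a b hab
    exact Fin.ext (ho a.val a.isLt b.val b.isLt hab)
  have hiinj : Function.Injective (fun j : Fin K => i j.val) := by
    intro a b hab
    exact Fin.ext (hi a.val a.isLt b.val b.isLt hab)
  refine ⟨?_, fun j => i j.val, fun j => o j.val, hiinj, hoinj, ?_⟩
  · have := Fintype.card_le_of_injective _ hoinj
    simpa [K] using this
  · refine ⟨hk, fun j => hpos j.val j.isLt, ?_, ?_⟩
    · intro j
      have h := hweak j.val j.isLt
      show R (i j.val) (o (finRotate K j).val) (o j.val)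
      rw [finRotate_val]
      exact h
    · refine ⟨⟨j₀, hj₀⟩, ?_⟩
      show ¬ R (i j₀) (o j₀) (o (finRotate K ⟨j₀, hj₀⟩).val)
      rw [finRotate_val]
      exact hstrict

/-- If a random assignment admits a trading cycle, then it admits a trading
cycle of size `k ≤ n` with `k` distinct agents and `k` distinct objects. -/
theorem stmt0 {n : ℕ} (R : Fin n → Fin n → Fin n → Prop) (hR : ∀ i, IsPref (R i))
    (p : Fin n → Fin n → ℝ) (hp : IsRandomAssignment p)
    (h : AdmitsTradingCycle R p) :
    ∃ (k : ℕ), k ≤ n ∧ ∃ (i : Fin k → Fin n) (o : Fin k → Fin n),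
      Function.Injective i ∧ Function.Injective o ∧ IsTradingCycle R p i o := by
  obtain ⟨k, iF, oF, htc⟩ := h
  obtain ⟨hk, hpos, hweak, j₀, hstrict⟩ := htc
  obtain ⟨m, rfl⟩ := Nat.exists_eq_succ_of_ne_zero hk.ne'
  set K := m + 1 with hK
  -- pass to ℕ-indexed cycle
  have hc : Cyc R p K (fun j => iF ⟨j % K, Nat.mod_lt j hk⟩)
      (fun j => oF ⟨j % K, Nat.mod_lt j hk⟩) := by
    refine ⟨hk, ?_, ?_, ?_⟩
    · intro j _
      exact hpos _
    · intro j hj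
      have h := hweak ⟨j, hj⟩
      have e3 : finRotate K ⟨j, hj⟩ = ⟨(j + 1) % K, Nat.mod_lt _ hk⟩ :=
        Fin.ext (finRotate_val _)
      rw [e3] at h
      show R (iF ⟨j % K, _⟩) (oF ⟨(j + 1) % K % K, _⟩) (oF ⟨j % K, _⟩)
      have e1 : (⟨j % K, Nat.mod_lt j hk⟩ : Fin K) = ⟨j, hj⟩ :=
        Fin.ext (Nat.mod_eq_of_lt hj)
      have e2 : (⟨(j + 1) % K % K, Nat.mod_lt _ hk⟩ : Fin K) = ⟨(j + 1) % K, Nat.mod_lt _ hk⟩ :=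
        Fin.ext (Nat.mod_eq_of_lt (Nat.mod_lt _ hk))
      rw [e1, e2]
      exact h
    · refine ⟨j₀.val, j₀.isLt, ?_⟩
      have h := hstrict
      have e3 : finRotate K j₀ = ⟨(j₀.val + 1) % K, Nat.mod_lt _ hk⟩ :=
        Fin.ext (finRotate_val _)
      rw [e3] at h
      show ¬ R (iF ⟨j₀.val % K, _⟩) (oF ⟨j₀.val % K, _⟩) (oF ⟨(j₀.val + 1) % K % K, _⟩)
      have e1 : (⟨j₀.val % K, Nat.mod_lt _ hk⟩ : Fin K) = j₀ :=
        Fin.ext (Nat.mod_eq_of_lt j₀.isLt)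
      have e2 : (⟨(j₀.val + 1) % K % K, Nat.mod_lt _ hk⟩ : Fin K)
          = ⟨(j₀.val + 1) % K, Nat.mod_lt _ hk⟩ :=
        Fin.ext (Nat.mod_eq_of_lt (Nat.mod_lt _ hk))
      rw [e1, e2]
      exact h
  obtain ⟨k', hk'K, i', o', hc', hi', ho'⟩ := cyc_shrink hR K _ _ hc
  obtain ⟨hkn, i'', o'', hii, hoo, htc'⟩ := cyc_to_goal hc' hi' ho'
  exact ⟨k', hkn, i'', o'', hii, hoo, htc'⟩
end

section
/- A random assignment p is SD-efficient if and only if p does not admit a trading cycle. -/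
open Finset
open scoped Classical

section Aux
variable {n : ℕ}

lemma total_refl {O : Type*} {r : O → O → Prop} (h : Total r) (a : O) : r a a :=
  (h a a).elim id id

lemma sum_Ico_shift {M : Type*} [AddCommMonoid M] (f : ℕ → M) (a b : ℕ) :
    ∑ x ∈ Finset.Ico a b, f (x+1) = ∑ x ∈ Finset.Ico (a+1) (b+1), f x := by
  rw [Finset.sum_Ico_eq_sum_range, Finset.sum_Ico_eq_sum_range]
  simp [Nat.add_sub_cancel, add_comm, add_assoc, add_left_comm]

lemma exists_dominating {R : Fin n → Fin n → Fin n → Prop} (hR : ∀ i, IsPref (R i))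
    {p : Fin n → Fin n → ℝ} (hp : IsRandomAssignment p) (h : AdmitsTradingCycle R p) :
    ∃ q, IsRandomAssignment q ∧ (∀ i, SDge (R i) (q i) (p i)) ∧ ∃ i, SDgt (R i) (q i) (p i) := by
  obtain ⟨k, i, o, hk, hpos, hweak, js, hstr⟩ := h
  have huniv : (univ : Finset (Fin k)).Nonempty := ⟨js, mem_univ _⟩
  set M : ℝ := univ.inf' huniv (fun j => p (i j) (o j)) with hM
  have hMpos : 0 < M := by
    rw [hM, Finset.lt_inf'_iff]; exact fun j _ => hpos j
  set ε : ℝ := M / k with hε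
  have hkpos : (0:ℝ) < k := by exact_mod_cast hk
  have hεpos : 0 < ε := div_pos hMpos hkpos
  have hεk : ε * k = M := by rw [hε]; field_simp
  set q : Fin n → Fin n → ℝ := fun i' o' =>
    p i' o' + ε * ((∑ j : Fin k, if i j = i' ∧ o (finRotate k j) = o' then (1:ℝ) else 0)
      - (∑ j : Fin k, if i j = i' ∧ o j = o' then (1:ℝ) else 0)) with hqdef
  -- nonnegativity of q
  have hq0 : ∀ i' o', 0 ≤ q i' o' := by
    intro i' o'
    have hS1 : 0 ≤ ∑ j : Fin k, if i j = i' ∧ o (finRotate k j) = o' then (1:ℝ) else 0 :=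
      Finset.sum_nonneg (by intro j _; split <;> norm_num)
    by_cases hw : ∃ j, i j = i' ∧ o j = o'
    · obtain ⟨j₀, hj₀⟩ := hw
      have hpM : M ≤ p i' o' := by
        have := Finset.inf'_le (fun j => p (i j) (o j)) (mem_univ j₀)
        rw [hj₀.1, hj₀.2] at this
        exact le_trans (le_of_eq hM) this
      have hS2 : (∑ j : Fin k, if i j = i' ∧ o j = o' then (1:ℝ) else 0) ≤ k := by
        calc (∑ j : Fin k, if i j = i' ∧ o j = o' then (1:ℝ) else 0)
            ≤ ∑ _j : Fin k, (1:ℝ) := Finset.sum_le_sum (by intro j _; split <;> norm_num)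
          _ = k := by simp
      have h2 : ε * (∑ j : Fin k, if i j = i' ∧ o j = o' then (1:ℝ) else 0) ≤ ε * k :=
        mul_le_mul_of_nonneg_left hS2 hεpos.le
      have h3 : 0 ≤ ε * (∑ j : Fin k, if i j = i' ∧ o (finRotate k j) = o' then (1:ℝ) else 0) :=
        mul_nonneg hεpos.le hS1
      simp only [hqdef]
      rw [mul_sub]
      linarith
    · push_neg at hw
      have hS2 : (∑ j : Fin k, if i j = i' ∧ o j = o' then (1:ℝ) else 0) = 0 := by
        apply Finset.sum_eq_zero; intro j _
        rw [if_neg]; rintro ⟨h1, h2⟩; exact hw j h1 h2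
      simp only [hqdef]
      rw [mul_sub, hS2]
      have := hp.1 i' o'
      nlinarith
  -- row sums
  have rowaux : ∀ (v : Fin k → Fin n) (i' : Fin n),
      (∑ o' : Fin n, ∑ j : Fin k, if i j = i' ∧ v j = o' then (1:ℝ) else 0)
        = ∑ j : Fin k, if i j = i' then (1:ℝ) else 0 := by
    intro v i'
    rw [Finset.sum_comm]
    refine Finset.sum_congr rfl fun j _ => ?_
    by_cases h : i j = i' <;> simp [h, ite_and]
  have hqrow : ∀ i', ∑ o', q i' o' = 1 := by
    intro i'
    simp only [hqdef]
    rw [Finset.sum_add_distrib, hp.2.1 i', ← Finset.mul_sum, Finset.sum_sub_distrib,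
      rowaux (fun j => o (finRotate k j)) i', rowaux o i', sub_self, mul_zero, add_zero]
  -- column sums
  have colaux : ∀ (v : Fin k → Fin n) (o' : Fin n),
      (∑ i' : Fin n, ∑ j : Fin k, if i j = i' ∧ v j = o' then (1:ℝ) else 0)
        = ∑ j : Fin k, if v j = o' then (1:ℝ) else 0 := by
    intro v o'
    rw [Finset.sum_comm]
    refine Finset.sum_congr rfl fun j _ => ?_
    by_cases h : v j = o' <;> simp [h, ite_and]
  have hqcol : ∀ o', ∑ i', q i' o' = 1 := by
    intro o'
    simp only [hqdef]
    rw [Finset.sum_add_distrib, hp.2.2 o', ← Finset.mul_sum, Finset.sum_sub_distrib,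
      colaux (fun j => o (finRotate k j)) o', colaux o o']
    rw [Equiv.sum_comp (finRotate k) (fun x => if o x = o' then (1:ℝ) else 0)]
    rw [sub_self, mul_zero, add_zero]
  -- cumulative sums
  have setaux : ∀ (v : Fin k → Fin n) (i' : Fin n) (S : Finset (Fin n)),
      (∑ o' ∈ S, ∑ j : Fin k, if i j = i' ∧ v j = o' then (1:ℝ) else 0)
        = ∑ j : Fin k, if i j = i' ∧ v j ∈ S then (1:ℝ) else 0 := by
    intro v i' S
    rw [Finset.sum_comm]
    refine Finset.sum_congr rfl fun j _ => ?_
    by_cases h : i j = i' <;> simp [h, ite_and, Finset.sum_ite_eq]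
  have hcum : ∀ (i' : Fin n) (t : Fin n),
      (∑ o' ∈ univ.filter (fun o' => R i' o' t), q i' o')
        = (∑ o' ∈ univ.filter (fun o' => R i' o' t), p i' o')
          + ε * ∑ j : Fin k,
            ((if i j = i' ∧ o (finRotate k j) ∈ univ.filter (fun o' => R i' o' t) then (1:ℝ) else 0)
              - (if i j = i' ∧ o j ∈ univ.filter (fun o' => R i' o' t) then (1:ℝ) else 0)) := by
    intro i' t
    simp only [hqdef]
    rw [Finset.sum_add_distrib, ← Finset.mul_sum, Finset.sum_sub_distrib,
      setaux (fun j => o (finRotate k j)) i' _, setaux o i' _, ← Finset.sum_sub_distrib]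
  have hterm : ∀ (i' : Fin n) (t : Fin n) (j : Fin k),
      0 ≤ (if i j = i' ∧ o (finRotate k j) ∈ univ.filter (fun o' => R i' o' t) then (1:ℝ) else 0)
        - (if i j = i' ∧ o j ∈ univ.filter (fun o' => R i' o' t) then (1:ℝ) else 0) := by
    intro i' t j
    by_cases h2 : i j = i' ∧ o j ∈ univ.filter (fun o' => R i' o' t)
    · have h1 : i j = i' ∧ o (finRotate k j) ∈ univ.filter (fun o' => R i' o' t) := by
        refine ⟨h2.1, ?_⟩
        have := h2.2
        simp only [mem_filter, mem_univ, true_and] at this ⊢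
        have hw := hweak j
        rw [h2.1] at hw
        exact (hR i').2 hw this
      rw [if_pos h1, if_pos h2]; norm_num
    · rw [if_neg h2]
      split <;> norm_num
  have hge : ∀ i', SDge (R i') (q i') (p i') := by
    intro i' t
    rw [hcum i' t]
    have : 0 ≤ ∑ j : Fin k,
        ((if i j = i' ∧ o (finRotate k j) ∈ univ.filter (fun o' => R i' o' t) then (1:ℝ) else 0)
          - (if i j = i' ∧ o j ∈ univ.filter (fun o' => R i' o' t) then (1:ℝ) else 0)) :=
      Finset.sum_nonneg fun j _ => hterm i' t j
    nlinarith
  refine ⟨q, ⟨hq0, hqrow, hqcol⟩, hge, i js, hge (i js), ?_⟩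
  -- strictness at agent i js, threshold o (finRotate k js)
  intro hc
  set t : Fin n := o (finRotate k js) with ht
  have hlt : (∑ o' ∈ univ.filter (fun o' => R (i js) o' t), p (i js) o')
      < ∑ o' ∈ univ.filter (fun o' => R (i js) o' t), q (i js) o' := by
    rw [hcum (i js) t]
    have hpossum : 0 < ∑ j : Fin k,
        ((if i j = i js ∧ o (finRotate k j) ∈ univ.filter (fun o' => R (i js) o' t) then (1:ℝ) else 0)
          - (if i j = i js ∧ o j ∈ univ.filter (fun o' => R (i js) o' t) then (1:ℝ) else 0)) := by
      apply Finset.sum_pos' (fun j _ => hterm (i js) t j)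
      refine ⟨js, mem_univ _, ?_⟩
      have hin : i js = i js ∧ o (finRotate k js) ∈ univ.filter (fun o' => R (i js) o' t) := by
        refine ⟨rfl, ?_⟩
        simp only [mem_filter, mem_univ, true_and, ht]
        exact total_refl (hR (i js)).1 _
      have hnotin : ¬ (i js = i js ∧ o js ∈ univ.filter (fun o' => R (i js) o' t)) := by
        rintro ⟨-, hmem⟩
        simp only [mem_filter, mem_univ, true_and, ht] at hmem
        exact hstr hmem
      rw [if_pos hin, if_neg hnotin]; norm_num
    nlinarith
  exact absurd (hc t) (not_le.2 hlt)

end Aux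
section Aux2
variable {n : ℕ}

lemma no_cycle_lemma {R : Fin n → Fin n → Fin n → Prop} (hR : ∀ i, IsPref (R i))
    {p : Fin n → Fin n → ℝ} (hp0 : ∀ i o, 0 ≤ p i o) :
    ∀ (N : ℕ) (d : Fin n → Fin n → ℝ),
      (univ.filter fun x : Fin n × Fin n => d x.1 x.2 ≠ 0).card = N →
      (∀ i o, 0 ≤ p i o + d i o) →
      (∀ i, ∑ o, d i o = 0) →
      (∀ o, ∑ i, d i o = 0) →
      (∀ i t, 0 ≤ ∑ o' ∈ univ.filter (fun o' => R i o' t), d i o') →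
      (∃ i t, 0 < ∑ o' ∈ univ.filter (fun o' => R i o' t), d i o') →
      AdmitsTradingCycle R p := by
  intro N
  induction N using Nat.strong_induction_on with
  | _ N IH =>
  intro d hcard h1 h2 h3 h4 h5
  -- there is a negative entry
  have hexneg : ∃ x : Fin n × Fin n, d x.1 x.2 < 0 := by
    obtain ⟨i₀, t₀, hposc⟩ := h5
    have hexpos : ∃ o, 0 < d i₀ o := by
      by_contra hc; push_neg at hc
      have : ∑ o' ∈ univ.filter (fun o' => R i₀ o' t₀), d i₀ o' ≤ 0 :=
        Finset.sum_nonpos fun o' _ => hc o'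
      linarith
    obtain ⟨o₁, ho₁⟩ := hexpos
    by_contra hc; push_neg at hc
    have hz := (Finset.sum_eq_zero_iff_of_nonneg
      (fun i (_ : i ∈ univ) => hc (i, o₁))).1 (h3 o₁)
    have := hz i₀ (mem_univ i₀)
    simp only at this
    linarith
  -- the one-step lemma
  have key : ∀ x : Fin n × Fin n, d x.1 x.2 < 0 →
      ∃ y : Fin n × Fin n, d y.1 y.2 < 0 ∧ R x.1 y.2 x.2 ∧ 0 < d x.1 y.2 := by
    rintro ⟨i, o⟩ hx
    have hrefl : R i o o := total_refl (hR i).1 o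
    have hmem : o ∈ univ.filter (fun o' => R i o' o) := by simp [hrefl]
    have hsum := h4 i o
    have hexpos : ∃ o', R i o' o ∧ 0 < d i o' := by
      by_contra hc; push_neg at hc
      have herase : ∑ o' ∈ (univ.filter (fun o' => R i o' o)).erase o, d i o' ≤ 0 := by
        apply Finset.sum_nonpos
        intro o' ho'
        have := Finset.mem_of_mem_erase ho'
        simp only [mem_filter, mem_univ, true_and] at this
        exact hc o' this
      have := Finset.add_sum_erase _ (d i) hmem
      simp only at hx
      linarith
    obtain ⟨o', ho'R, ho'pos⟩ := hexpos
    have : ∃ i', d i' o' < 0 := by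
      by_contra hc; push_neg at hc
      have hz := (Finset.sum_eq_zero_iff_of_nonneg
        (fun i' (_ : i' ∈ univ) => hc i')).1 (h3 o')
      linarith [hz i (mem_univ i)]
    obtain ⟨i', hi'⟩ := this
    exact ⟨(i', o'), hi', ho'R, ho'pos⟩
  -- the chain
  obtain ⟨x₀, hx₀⟩ := hexneg
  let fstep : {x : Fin n × Fin n // d x.1 x.2 < 0} → {x : Fin n × Fin n // d x.1 x.2 < 0} :=
    fun x => ⟨(key x.1 x.2).choose, (key x.1 x.2).choose_spec.1⟩
  let s : ℕ → {x : Fin n × Fin n // d x.1 x.2 < 0} := fun m => fstep^[m] ⟨x₀, hx₀⟩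
  let G : ℕ → Fin n := fun m => (s m).1.1
  let F : ℕ → Fin n := fun m => (s m).1.2
  have hneg : ∀ m, d (G m) (F m) < 0 := fun m => (s m).2
  have hsucc : ∀ m, s (m+1) = fstep (s m) := fun m => Function.iterate_succ_apply' _ _ _
  have edgeR : ∀ m, R (G m) (F (m+1)) (F m) := by
    intro m
    have h := (key (s m).1 (s m).2).choose_spec
    show R (G m) (s (m+1)).1.2 (F m)
    rw [hsucc m]
    exact h.2.1
  have edgeP : ∀ m, 0 < d (G m) (F (m+1)) := by
    intro m
    have h := (key (s m).1 (s m).2).choose_spec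
    show 0 < d (G m) (s (m+1)).1.2
    rw [hsucc m]
    exact h.2.2
  -- pigeonhole: a repeated object
  have hQ : ∃ m, 0 < m ∧ ∃ a, F (a + m) = F a := by
    obtain ⟨a', b', hne, heq⟩ := Fintype.exists_ne_map_eq_of_card_lt
      (fun m : Fin (n+1) => F m) (by simp)
    rcases Nat.lt_or_ge (a' : ℕ) (b' : ℕ) with h | h
    · refine ⟨(b' : ℕ) - a', by omega, (a' : ℕ), ?_⟩
      have e : (a' : ℕ) + ((b' : ℕ) - a') = b' := by omega
      rw [e]; exact heq.symm
    · have h' : (b' : ℕ) < (a' : ℕ) := by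
        rcases Nat.lt_or_ge (b' : ℕ) (a' : ℕ) with h2 | h2
        · exact h2
        · exact absurd (Fin.ext (le_antisymm h2 h) : a' = b') hne
      refine ⟨(a' : ℕ) - b', by omega, (b' : ℕ), ?_⟩
      have e : (b' : ℕ) + ((a' : ℕ) - b') = a' := by omega
      rw [e]; exact heq
  set m₀ := Nat.find hQ with hm₀def
  obtain ⟨hm₀pos, a₀, hwrap⟩ := Nat.find_spec hQ
  have Finj : ∀ c c', a₀ ≤ c → c < c' → c' < a₀ + m₀ → F c ≠ F c' := by
    intro c c' hc1 hc2 hc3 hF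
    have : c + (c' - c) = c' := by omega
    exact Nat.find_min hQ (show c' - c < m₀ by omega) ⟨by omega, c, by rw [this]; exact hF.symm⟩
  by_cases hstrict : ∃ j, a₀ ≤ j ∧ j < a₀ + m₀ ∧ ¬ R (G j) (F j) (F (j + 1))
  · -- found a genuine trading cycle
    obtain ⟨m', hm'⟩ : ∃ m', m₀ = m' + 1 := ⟨m₀ - 1, by omega⟩
    have hrot : ∀ j : Fin (m' + 1), F (a₀ + ((finRotate (m'+1)) j : ℕ)) = F (a₀ + (j : ℕ) + 1) := by
      intro j
      rw [finRotate_succ_apply, Fin.val_add_one]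
      by_cases hj : j = Fin.last m'
      · rw [if_pos hj]
        have hjv : (j : ℕ) = m' := by rw [hj]; rfl
        have e : a₀ + (j : ℕ) + 1 = a₀ + m₀ := by omega
        rw [e, hwrap, Nat.add_zero]
      · rw [if_neg hj, ← Nat.add_assoc]
    refine ⟨m' + 1, fun j => G (a₀ + (j : ℕ)), fun j => F (a₀ + (j : ℕ)),
      Nat.succ_pos _, ?_, ?_, ?_⟩
    · intro j
      have h1j := h1 (G (a₀ + (j : ℕ))) (F (a₀ + (j : ℕ)))
      have := hneg (a₀ + (j : ℕ))
      linarith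
    · intro j
      show R (G (a₀ + (j : ℕ))) (F (a₀ + (((finRotate (m'+1)) j : Fin (m'+1)) : ℕ))) (F (a₀ + (j : ℕ)))
      rw [hrot j]
      exact edgeR (a₀ + (j : ℕ))
    · obtain ⟨j, hja, hjb, hjR⟩ := hstrict
      have hjlt : j - a₀ < m' + 1 := by omega
      refine ⟨⟨j - a₀, hjlt⟩, ?_⟩
      show ¬ R (G (a₀ + ((⟨j - a₀, hjlt⟩ : Fin (m'+1)) : ℕ)))
        (F (a₀ + ((⟨j - a₀, hjlt⟩ : Fin (m'+1)) : ℕ)))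
        (F (a₀ + (((finRotate (m'+1)) ⟨j - a₀, hjlt⟩ : Fin (m'+1)) : ℕ)))
      rw [hrot ⟨j - a₀, hjlt⟩]
      have e : a₀ + ((⟨j - a₀, hjlt⟩ : Fin (m'+1)) : ℕ) = j := by simp; omega
      rw [e]
      exact hjR
  · -- all edges on the cycle are indifferences: reduce
    push_neg at hstrict
    set J : Finset ℕ := Finset.Ico a₀ (a₀ + m₀) with hJdef
    have hJne : J.Nonempty := by
      rw [hJdef]; rw [Finset.nonempty_Ico]; omega
    set ε : ℝ := J.inf' hJne (fun j => min (-(d (G j) (F j))) (d (G j) (F (j+1)))) with hεdef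
    have hεpos : 0 < ε := by
      rw [hεdef, Finset.lt_inf'_iff]
      intro j _
      exact lt_min (by linarith [hneg j]) (edgeP j)
    set L : Fin n → Fin n → ℝ :=
      fun i o => ∑ j ∈ J, if G j = i ∧ F j = o then ε else 0 with hLdef
    set Gn : Fin n → Fin n → ℝ :=
      fun i o => ∑ j ∈ J, if G j = i ∧ F (j+1) = o then ε else 0 with hGndef
    set d' : Fin n → Fin n → ℝ := fun i o => d i o + L i o - Gn i o with hd'def
    have FinjJ : ∀ c ∈ J, ∀ c' ∈ J, c ≠ c' → F c ≠ F c' := by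
      intro c hc c' hc' hne
      rw [hJdef, Finset.mem_Ico] at hc hc'
      rcases hne.lt_or_gt with h | h
      · exact Finj c c' hc.1 h hc'.2
      · exact fun hF => Finj c' c hc'.1 h hc.2 hF.symm
    have FinjJ' : ∀ c ∈ J, ∀ c' ∈ J, c ≠ c' → F (c+1) ≠ F (c'+1) := by
      have aux : ∀ c c', a₀ ≤ c → c < c' → c' < a₀ + m₀ → F (c+1) = F (c'+1) → False := by
        intro c c' hc1 hc2 hc3 hF
        by_cases htop : c' + 1 = a₀ + m₀
        · have : F (c+1) = F a₀ := by rw [hF, htop, hwrap]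
          exact Finj a₀ (c+1) le_rfl (by omega) (by omega) this.symm
        · exact Finj (c+1) (c'+1) (by omega) (by omega) (by omega) hF
      intro c hc c' hc' hne
      rw [hJdef, Finset.mem_Ico] at hc hc'
      rcases hne.lt_or_gt with h | h
      · exact fun hF => aux c c' hc.1 h hc'.2 hF
      · exact fun hF => aux c' c hc'.1 h hc.2 hF.symm
    have hLval : ∀ i o, ∀ j₀ ∈ J, G j₀ = i → F j₀ = o → L i o = ε := by
      intro i o j₀ hj₀J hg hf
      show (∑ j ∈ J, if G j = i ∧ F j = o then ε else 0) = ε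
      rw [Finset.sum_eq_single j₀]
      · rw [if_pos ⟨hg, hf⟩]
      · rintro j hjJ hjne
        rw [if_neg]
        rintro ⟨-, hf'⟩
        exact FinjJ j hjJ j₀ hj₀J hjne (by rw [hf', hf])
      · intro hnot; exact absurd hj₀J hnot
    have hGnval : ∀ i o, ∀ j₀ ∈ J, G j₀ = i → F (j₀+1) = o → Gn i o = ε := by
      intro i o j₀ hj₀J hg hf
      show (∑ j ∈ J, if G j = i ∧ F (j+1) = o then ε else 0) = ε
      rw [Finset.sum_eq_single j₀]
      · rw [if_pos ⟨hg, hf⟩]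
      · rintro j hjJ hjne
        rw [if_neg]
        rintro ⟨-, hf'⟩
        exact FinjJ' j hjJ j₀ hj₀J hjne (by rw [hf', hf])
      · intro hnot; exact absurd hj₀J hnot
    have hLcases : ∀ i o, L i o = 0 ∨ (L i o = ε ∧ d i o < 0 ∧ ε ≤ -d i o) := by
      intro i o
      by_cases hw : ∃ j ∈ J, G j = i ∧ F j = o
      · obtain ⟨j₀, hj₀J, hg, hf⟩ := hw
        right
        refine ⟨hLval i o j₀ hj₀J hg hf, ?_, ?_⟩
        · rw [← hg, ← hf]; exact hneg j₀
        · calc ε ≤ min (-(d (G j₀) (F j₀))) (d (G j₀) (F (j₀+1))) := by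
                rw [hεdef]; exact Finset.inf'_le _ hj₀J
            _ ≤ -(d (G j₀) (F j₀)) := min_le_left _ _
            _ = -d i o := by rw [hg, hf]
      · left
        rw [hLdef]
        apply Finset.sum_eq_zero
        intro j hjJ
        rw [if_neg]
        rintro ⟨hg, hf⟩
        exact hw ⟨j, hjJ, hg, hf⟩
    have hGncases : ∀ i o, Gn i o = 0 ∨ (Gn i o = ε ∧ 0 < d i o ∧ ε ≤ d i o) := by
      intro i o
      by_cases hw : ∃ j ∈ J, G j = i ∧ F (j+1) = o
      · obtain ⟨j₀, hj₀J, hg, hf⟩ := hw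
        right
        refine ⟨hGnval i o j₀ hj₀J hg hf, ?_, ?_⟩
        · rw [← hg, ← hf]; exact edgeP j₀
        · calc ε ≤ min (-(d (G j₀) (F j₀))) (d (G j₀) (F (j₀+1))) := by
                rw [hεdef]; exact Finset.inf'_le _ hj₀J
            _ ≤ d (G j₀) (F (j₀+1)) := min_le_right _ _
            _ = d i o := by rw [hg, hf]
      · left
        rw [hGndef]
        apply Finset.sum_eq_zero
        intro j hjJ
        rw [if_neg]
        rintro ⟨hg, hf⟩
        exact hw ⟨j, hjJ, hg, hf⟩
    have hbounds : ∀ i o,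
        (d i o ≤ d' i o ∧ d' i o ≤ 0 ∧ d i o < 0) ∨
        (0 ≤ d' i o ∧ d' i o ≤ d i o ∧ 0 < d i o) ∨ d' i o = d i o := by
      intro i o
      rcases hLcases i o with hL0 | ⟨hLε, hdneg, hεle⟩
      · rcases hGncases i o with hG0 | ⟨hGε, hdpos, hεle⟩
        · right; right; rw [hd'def]; simp only; rw [hL0, hG0]; ring
        · right; left
          rw [hd'def]; simp only; rw [hL0, hGε]
          refine ⟨by linarith, by linarith, hdpos⟩
      · have hG0 : Gn i o = 0 := by
          rcases hGncases i o with h | ⟨-, hdp, -⟩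
          · exact h
          · linarith
        left
        rw [hd'def]; simp only; rw [hLε, hG0]
        refine ⟨by linarith, by linarith, hdneg⟩
    have h1' : ∀ i o, 0 ≤ p i o + d' i o := by
      intro i o
      rcases hbounds i o with ⟨hb, -, -⟩ | ⟨hb, -, -⟩ | hb
      · linarith [h1 i o]
      · linarith [hp0 i o]
      · rw [hb]; exact h1 i o
    have hsub : ∀ x : Fin n × Fin n, d' x.1 x.2 ≠ 0 → d x.1 x.2 ≠ 0 := by
      intro x hx
      rcases hbounds x.1 x.2 with ⟨-, -, h⟩ | ⟨-, -, h⟩ | h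
      · exact h.ne
      · exact h.ne'
      · intro h0; exact hx (by rw [h, h0])
    have hvanish : ∃ x : Fin n × Fin n, d x.1 x.2 ≠ 0 ∧ d' x.1 x.2 = 0 := by
      obtain ⟨j₀, hj₀J, hj₀⟩ := Finset.exists_mem_eq_inf' hJne
        (fun j => min (-(d (G j) (F j))) (d (G j) (F (j+1))))
      have hεeq : ε = min (-(d (G j₀) (F j₀))) (d (G j₀) (F (j₀+1))) := by
        rw [hεdef]; exact hj₀
      rcases min_cases (-(d (G j₀) (F j₀))) (d (G j₀) (F (j₀+1))) with ⟨hmin, -⟩ | ⟨hmin, -⟩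
      · refine ⟨(G j₀, F j₀), (hneg j₀).ne, ?_⟩
        have hL : L (G j₀) (F j₀) = ε := hLval _ _ j₀ hj₀J rfl rfl
        have hG0 : Gn (G j₀) (F j₀) = 0 := by
          rcases hGncases (G j₀) (F j₀) with h | ⟨-, hdp, -⟩
          · exact h
          · linarith [hneg j₀]
        show d (G j₀) (F j₀) + L (G j₀) (F j₀) - Gn (G j₀) (F j₀) = 0
        rw [hL, hG0, hεeq, hmin]; ring
      · refine ⟨(G j₀, F (j₀+1)), (edgeP j₀).ne', ?_⟩
        have hGn : Gn (G j₀) (F (j₀+1)) = ε := hGnval _ _ j₀ hj₀J rfl rfl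
        have hL0 : L (G j₀) (F (j₀+1)) = 0 := by
          rcases hLcases (G j₀) (F (j₀+1)) with h | ⟨-, hdn, -⟩
          · exact h
          · linarith [edgeP j₀]
        show d (G j₀) (F (j₀+1)) + L (G j₀) (F (j₀+1)) - Gn (G j₀) (F (j₀+1)) = 0
        rw [hL0, hGn, hεeq, hmin]; ring
    have hcard' : (univ.filter fun x : Fin n × Fin n => d' x.1 x.2 ≠ 0).card < N := by
      rw [← hcard]
      apply Finset.card_lt_card
      have hss : (univ.filter fun x : Fin n × Fin n => d' x.1 x.2 ≠ 0)
          ⊆ univ.filter fun x : Fin n × Fin n => d x.1 x.2 ≠ 0 := by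
        intro x hx
        simp only [mem_filter, mem_univ, true_and] at hx ⊢
        exact hsub x hx
      rw [Finset.ssubset_iff_of_subset hss]
      obtain ⟨x', hx1, hx2⟩ := hvanish
      exact ⟨x', by simp [hx1], by simp [hx2]⟩
    -- row sums
    have hLrow : ∀ i, ∑ o, L i o = ∑ j ∈ J, if G j = i then ε else 0 := by
      intro i
      rw [hLdef]; simp only
      rw [Finset.sum_comm]
      refine Finset.sum_congr rfl fun j _ => ?_
      by_cases h : G j = i <;> simp [h, ite_and]
    have hGnrow : ∀ i, ∑ o, Gn i o = ∑ j ∈ J, if G j = i then ε else 0 := by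
      intro i
      rw [hGndef]; simp only
      rw [Finset.sum_comm]
      refine Finset.sum_congr rfl fun j _ => ?_
      by_cases h : G j = i <;> simp [h, ite_and]
    have h2' : ∀ i, ∑ o, d' i o = 0 := by
      intro i
      rw [hd'def]; simp only
      rw [Finset.sum_sub_distrib, Finset.sum_add_distrib, hLrow i, hGnrow i, h2 i]
      ring
    -- column sums
    have hLcol : ∀ o, ∑ i, L i o = ∑ j ∈ J, if F j = o then ε else 0 := by
      intro o
      rw [hLdef]; simp only
      rw [Finset.sum_comm]
      refine Finset.sum_congr rfl fun j _ => ?_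
      by_cases h : F j = o <;> simp [h, ite_and]
    have hGncol : ∀ o, ∑ i, Gn i o = ∑ j ∈ J, if F (j+1) = o then ε else 0 := by
      intro o
      rw [hGndef]; simp only
      rw [Finset.sum_comm]
      refine Finset.sum_congr rfl fun j _ => ?_
      by_cases h : F (j+1) = o <;> simp [h, ite_and]
    have hshift : ∀ o : Fin n,
        (∑ j ∈ J, if F (j+1) = o then ε else 0) = ∑ j ∈ J, if F j = o then ε else 0 := by
      intro o
      rw [hJdef]
      rw [sum_Ico_shift (fun j => if F j = o then ε else 0) a₀ (a₀ + m₀)]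
      rw [Finset.sum_Ico_succ_top (by omega : a₀ + 1 ≤ a₀ + m₀)]
      rw [Finset.sum_eq_sum_Ico_succ_bot (by omega : a₀ < a₀ + m₀)]
      rw [hwrap]
      ring
    have h3' : ∀ o, ∑ i, d' i o = 0 := by
      intro o
      rw [hd'def]; simp only
      rw [Finset.sum_sub_distrib, Finset.sum_add_distrib, hLcol o, hGncol o, h3 o, hshift o]
      ring
    -- cumulative sums are unchanged
    have hcum : ∀ i t, (∑ o' ∈ univ.filter (fun o' => R i o' t), d' i o')
        = ∑ o' ∈ univ.filter (fun o' => R i o' t), d i o' := by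
      intro i t
      have e1 : (∑ o' ∈ univ.filter (fun o' => R i o' t), L i o')
          = ∑ j ∈ J, if G j = i ∧ R i (F j) t then ε else 0 := by
        rw [hLdef]; simp only
        rw [Finset.sum_comm]
        refine Finset.sum_congr rfl fun j _ => ?_
        by_cases h : G j = i <;> simp [h, ite_and, Finset.sum_ite_eq]
      have e2 : (∑ o' ∈ univ.filter (fun o' => R i o' t), Gn i o')
          = ∑ j ∈ J, if G j = i ∧ R i (F (j+1)) t then ε else 0 := by
        rw [hGndef]; simp only
        rw [Finset.sum_comm]
        refine Finset.sum_congr rfl fun j _ => ?_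
        by_cases h : G j = i <;> simp [h, ite_and, Finset.sum_ite_eq]
      have e3 : (∑ j ∈ J, if G j = i ∧ R i (F j) t then ε else 0)
          = ∑ j ∈ J, if G j = i ∧ R i (F (j+1)) t then ε else 0 := by
        refine Finset.sum_congr rfl fun j hj => ?_
        by_cases hg : G j = i
        · have hjJ := hj
          rw [hJdef, Finset.mem_Ico] at hjJ
          have hfwd : R (G j) (F (j+1)) (F j) := edgeR j
          have hbwd : R (G j) (F j) (F (j+1)) := hstrict j hjJ.1 hjJ.2
          have hiff : R i (F j) t ↔ R i (F (j+1)) t := by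
            rw [← hg]
            exact ⟨fun h => (hR (G j)).2 hfwd h, fun h => (hR (G j)).2 hbwd h⟩
          by_cases ht1 : R i (F j) t
          · rw [if_pos ⟨hg, ht1⟩, if_pos ⟨hg, hiff.1 ht1⟩]
          · rw [if_neg (fun hx => ht1 hx.2), if_neg (fun hx => ht1 (hiff.2 hx.2))]
        · rw [if_neg (fun hx => hg hx.1), if_neg (fun hx => hg hx.1)]
      rw [hd'def]; simp only
      rw [Finset.sum_sub_distrib, Finset.sum_add_distrib, e1, e2, e3]
      ring
    have h4' : ∀ i t, 0 ≤ ∑ o' ∈ univ.filter (fun o' => R i o' t), d' i o' := by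
      intro i t; rw [hcum i t]; exact h4 i t
    have h5' : ∃ i t, 0 < ∑ o' ∈ univ.filter (fun o' => R i o' t), d' i o' := by
      obtain ⟨i, t, ht⟩ := h5
      exact ⟨i, t, by rw [hcum i t]; exact ht⟩
    exact IH _ hcard' d' rfl h1' h2' h3' h4' h5'

end Aux2
/-- A random assignment is SD-efficient iff it admits no trading cycle. -/
theorem stmt1 {n : ℕ} (R : Fin n → Fin n → Fin n → Prop) (hR : ∀ i, IsPref (R i))
    (p : Fin n → Fin n → ℝ) (hp : IsRandomAssignment p) :
    SDEfficient R p ↔ ¬ AdmitsTradingCycle R p := by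
  constructor
  · intro hEff hAdm
    exact hEff (exists_dominating hR hp hAdm)
  · rintro hNo ⟨q, hq, hge, i₁, hgt⟩
    apply hNo
    apply no_cycle_lemma hR hp.1
      ((univ.filter fun x : Fin n × Fin n => (q x.1 x.2 - p x.1 x.2) ≠ 0).card)
      (fun i o => q i o - p i o) rfl
    · intro i o
      have := hq.1 i o
      linarith
    · intro i
      rw [Finset.sum_sub_distrib, hq.2.1 i, hp.2.1 i]
      ring
    · intro o
      rw [Finset.sum_sub_distrib, hq.2.2 o, hp.2.2 o]
      ring
    · intro i t
      have := hge i t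
      rw [Finset.sum_sub_distrib]
      linarith
    · obtain ⟨t, ht⟩ : ∃ t, ¬ ((∑ o' ∈ univ.filter (fun o' => R i₁ o' t), q i₁ o')
          ≤ ∑ o' ∈ univ.filter (fun o' => R i₁ o' t), p i₁ o') := by
        by_contra hc
        push_neg at hc
        exact hgt.2 (fun t => hc t)
      push_neg at ht
      refine ⟨i₁, t, ?_⟩
      rw [Finset.sum_sub_distrib]
      linarith
end

section
/- For n = 3 agents and 3 objects, allowing indifferences in preferences, a random assignment is ex post efficient if and only if it is SD-efficient. -/
open Finset
open scoped Classical

section Aux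

lemma pref_iff_card {O : Type*} [Fintype O] (R : O → O → Prop) (hR : IsPref R)
    (a b : O) : R a b ↔ (univ.filter fun x => R b x).card ≤ (univ.filter fun x => R a x).card := by
  obtain ⟨htot, htr⟩ := hR
  constructor
  · intro h
    apply Finset.card_le_card
    intro x hx
    simp only [mem_filter, mem_univ, true_and] at hx ⊢
    exact htr h hx
  · intro h
    by_contra hab
    have hba : R b a := (htot a b).resolve_left hab
    have hsub : (univ.filter fun x => R a x) ⊂ (univ.filter fun x => R b x) := by
      constructor
      · intro x hx
        simp only [mem_filter, mem_univ, true_and] at hx ⊢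
        exact htr hba hx
      · intro hsub'
        have : b ∈ (univ.filter fun x => R b x) := by
          simp only [mem_filter, mem_univ, true_and]
          exact (htot b b).elim id id
        have hb := hsub' this
        simp only [mem_filter, mem_univ, true_and] at hb
        exact hab hb
    exact absurd h (not_le.mpr (Finset.card_lt_card hsub))

lemma sort3 (le : Fin 3 → Fin 3 → Prop) (htot : ∀ a b, le a b ∨ le b a) :
    ∃ o1 o2 o3 : Fin 3, o1 ≠ o2 ∧ o1 ≠ o3 ∧ o2 ≠ o3 ∧
      (∀ x, x = o1 ∨ x = o2 ∨ x = o3) ∧ le o1 o2 ∧ le o2 o3 := by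
  have hcov : ∀ x : Fin 3, x = 0 ∨ x = 1 ∨ x = 2 := by decide
  rcases htot 0 1 with h01 | h10
  · rcases htot 1 2 with h12 | h21
    · exact ⟨0, 1, 2, by decide, by decide, by decide, hcov, h01, h12⟩
    · rcases htot 0 2 with h02 | h20
      · exact ⟨0, 2, 1, by decide, by decide, by decide, by decide, h02, h21⟩
      · exact ⟨2, 0, 1, by decide, by decide, by decide, by decide, h20, h01⟩
  · rcases htot 0 2 with h02 | h20
    · exact ⟨1, 0, 2, by decide, by decide, by decide, by decide, h10, h02⟩
    · rcases htot 1 2 with h12 | h21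
      · exact ⟨1, 2, 0, by decide, by decide, by decide, by decide, h12, h20⟩
      · exact ⟨2, 1, 0, by decide, by decide, by decide, by decide, h21, h10⟩

lemma flow_lemma (R : Fin 3 → Fin 3 → Prop) (hR : IsPref R)
    (x y : Fin 3 → ℝ) (hx : ∀ o, 0 ≤ x o) (hy : ∀ o, 0 ≤ y o)
    (hsum : ∑ o, x o = ∑ o, y o) (hSD : SDge R x y) :
    ∃ f : Fin 3 → Fin 3 → ℝ,
      (∀ o o', 0 ≤ f o o') ∧
      (∀ o o', f o o' ≠ 0 → R o' o ∧ o ≠ o') ∧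
      (∀ o, ∑ o', f o o' ≤ y o) ∧
      (∀ o, x o - y o = ∑ o', f o' o - ∑ o', f o o') ∧
      (¬ SDge R y x → ∃ o o', f o o' ≠ 0 ∧ ¬ R o o') := by
  obtain ⟨u, hRu⟩ : ∃ u : Fin 3 → ℕ, ∀ a b, R a b ↔ u b ≤ u a :=
    ⟨fun o => (univ.filter fun o' => R o o').card, fun a b => pref_iff_card R hR a b⟩
  set D : Fin 3 → ℝ := fun o => x o - y o with hDdef
  obtain ⟨o1, o2, o3, h12, h13, h23, hcov, hle12, hle23⟩ :=
    sort3 (fun a b => u b < u a ∨ (u a = u b ∧ D b ≤ D a)) (by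
      intro a b
      rcases lt_trichotomy (u a) (u b) with h | h | h
      · right; left; exact h
      · rcases le_total (D a) (D b) with h' | h'
        · right; right; exact ⟨h.symm, h'⟩
        · left; right; exact ⟨h, h'⟩
      · left; left; exact h)
  have u21 : u o2 ≤ u o1 := by rcases hle12 with h | ⟨h, _⟩ <;> omega
  have u32 : u o3 ≤ u o2 := by rcases hle23 with h | ⟨h, _⟩ <;> omega
  have tie12 : u o1 = u o2 → D o2 ≤ D o1 := by
    intro h; rcases hle12 with h' | ⟨_, h'⟩ <;> [omega; exact h']
  have tie23 : u o2 = u o3 → D o3 ≤ D o2 := by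
    intro h; rcases hle23 with h' | ⟨_, h'⟩ <;> [omega; exact h']
  have hfull : ∀ g : Fin 3 → ℝ, ∑ o, g o = g o1 + g o2 + g o3 := by
    intro g
    have : (univ : Finset (Fin 3)) = {o1, o2, o3} := by
      ext z; simp only [mem_univ, mem_insert, mem_singleton, true_iff]; exact hcov z
    rw [this, Finset.sum_insert (by simp [h12, h13]), Finset.sum_insert (by simp [h23]),
      Finset.sum_singleton, add_assoc]
  have htotal : D o1 + D o2 + D o3 = 0 := by
    have h1 := hfull x; have h2 := hfull y
    simp only [hDdef]; linarith
  have hsplit : ∀ o, ∑ o' ∈ univ.filter (fun o' => R o' o), D o' =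
      (if u o ≤ u o1 then D o1 else 0) + (if u o ≤ u o2 then D o2 else 0) +
      (if u o ≤ u o3 then D o3 else 0) := by
    intro o
    rw [Finset.sum_filter, hfull (fun o' => if R o' o then D o' else 0)]
    simp only [hRu]
  have hD : ∀ o, 0 ≤ ∑ o' ∈ univ.filter (fun o' => R o' o), D o' := by
    intro o
    have := hSD o
    have heq : ∑ o' ∈ univ.filter (fun o' => R o' o), D o' =
        (∑ o' ∈ univ.filter (fun o' => R o' o), x o') -
        (∑ o' ∈ univ.filter (fun o' => R o' o), y o') := by
      rw [← Finset.sum_sub_distrib]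
    rw [heq]; linarith
  have hD1 := hD o1; rw [hsplit o1, if_pos le_rfl] at hD1
  have hD2 := hD o2; rw [hsplit o2, if_pos u21, if_pos le_rfl] at hD2
  -- P1 and P2 nonneg
  have hP1 : 0 ≤ D o1 := by
    rcases eq_or_lt_of_le u21 with he1 | hl1
    · have t12 := tie12 he1.symm
      rcases eq_or_lt_of_le u32 with he2 | hl2
      · have t23 := tie23 he2.symm
        rw [if_pos (by omega : u o1 ≤ u o2), if_pos (by omega : u o1 ≤ u o3)] at hD1
        linarith
      · rw [if_pos (by omega : u o1 ≤ u o2), if_neg (by omega)] at hD1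
        linarith
    · rw [if_neg (by omega), if_neg (by omega)] at hD1
      linarith
  have hP2 : 0 ≤ D o1 + D o2 := by
    rcases eq_or_lt_of_le u32 with he2 | hl2
    · have t23 := tie23 he2.symm
      rcases eq_or_lt_of_le u21 with he1 | hl1
      · have t12 := tie12 he1.symm
        linarith
      · linarith
    · rw [if_neg (by omega)] at hD2
      linarith
  set P1 : ℝ := D o1 with hP1def
  set P2 : ℝ := D o1 + D o2 with hP2def
  set m : ℝ := min P1 P2 with hm
  have hm0 : 0 ≤ m := le_min hP1 hP2
  have hmP1 : m ≤ P1 := min_le_left _ _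
  have hmP2 : m ≤ P2 := min_le_right _ _
  set f : Fin 3 → Fin 3 → ℝ := fun o o' =>
    (if o = o3 ∧ o' = o1 then m else 0) + (if o = o2 ∧ o' = o1 then P1 - m else 0) +
    (if o = o3 ∧ o' = o2 then P2 - m else 0) with hf
  have hval : ∀ o o', f o o' ≠ 0 → (o = o3 ∧ o' = o1) ∨ (o = o2 ∧ o' = o1) ∨
      (o = o3 ∧ o' = o2) := by
    intro o o' h
    by_contra hc
    push_neg at hc
    simp only [hf] at h
    rw [if_neg, if_neg, if_neg] at h
    · exact h (by ring)
    · intro ⟨ha, hb⟩; exact (hc.2.2 ha) hb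
    · intro ⟨ha, hb⟩; exact (hc.2.1 ha) hb
    · intro ⟨ha, hb⟩; exact (hc.1 ha) hb
  have ne21 := Ne.symm h12
  have ne31 := Ne.symm h13
  have ne32 := Ne.symm h23
  have f31 : f o3 o1 = m := by simp [hf, h12, h13, h23, ne21, ne31, ne32]
  have f21 : f o2 o1 = P1 - m := by simp [hf, h12, h13, h23, ne21, ne31, ne32]
  have f32 : f o3 o2 = P2 - m := by simp [hf, h12, h13, h23, ne21, ne31, ne32]
  have f_nonneg : ∀ o o', 0 ≤ f o o' := by
    intro o o'
    simp only [hf]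
    split_ifs <;> linarith
  refine ⟨f, f_nonneg, ?_, ?_, ?_, ?_⟩
  · -- edge validity
    intro o o' h
    rcases hval o o' h with ⟨ha, hb⟩ | ⟨ha, hb⟩ | ⟨ha, hb⟩ <;> rw [ha, hb]
    · exact ⟨(hRu o1 o3).2 (u32.trans u21), Ne.symm h13⟩
    · exact ⟨(hRu o1 o2).2 u21, Ne.symm h12⟩
    · exact ⟨(hRu o2 o3).2 u32, ne32⟩
  · -- capacity
    intro o
    rw [hfull (fun o' => f o o')]
    rcases hcov o with h | h | h <;> rw [h]
    · have e1 : f o1 o1 = 0 := by simp [hf, h12, h13, h23, ne21, ne31, ne32]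
      have e2 : f o1 o2 = 0 := by simp [hf, h12, h13, h23, ne21, ne31, ne32]
      have e3 : f o1 o3 = 0 := by simp [hf, h12, h13, h23, ne21, ne31, ne32]
      rw [e1, e2, e3]; simpa using hy o1
    · have e1 : f o2 o1 = P1 - m := f21
      have e2 : f o2 o2 = 0 := by simp [hf, h12, h13, h23, ne21, ne31, ne32]
      have e3 : f o2 o3 = 0 := by simp [hf, h12, h13, h23, ne21, ne31, ne32]
      rw [e1, e2, e3]
      rcases le_total P1 P2 with h | h
      · have : m = P1 := min_eq_left h
        rw [this]; simpa using hy o2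
      · have : m = P2 := min_eq_right h
        rw [this]
        have : P1 - P2 = -(D o2) := by rw [hP1def, hP2def]; ring
        rw [this]
        have := hx o2
        simp only [hDdef]; linarith [hy o2]
    · have e1 : f o3 o1 = m := f31
      have e2 : f o3 o2 = P2 - m := f32
      have e3 : f o3 o3 = 0 := by simp [hf, h12, h13, h23, ne21, ne31, ne32]
      rw [e1, e2, e3]
      have hyx : P2 = -(D o3) := by rw [hP2def]; linarith
      have := hx o3
      simp only [add_zero]
      rw [show m + (P2 - m) = P2 by ring, hyx]
      simp only [hDdef]; linarith [hy o3]
  · -- conservation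
    intro o
    rw [hfull (fun o' => f o' o), hfull (fun o' => f o o')]
    rcases hcov o with h | h | h <;> rw [h]
    · have e1 : f o1 o1 = 0 := by simp [hf, h12, h13, h23, ne21, ne31, ne32]
      have e2 : f o2 o1 = P1 - m := f21
      have e3 : f o3 o1 = m := f31
      have e4 : f o1 o2 = 0 := by simp [hf, h12, h13, h23, ne21, ne31, ne32]
      have e5 : f o1 o3 = 0 := by simp [hf, h12, h13, h23, ne21, ne31, ne32]
      rw [e1, e2, e3, e4, e5]
      show D o1 = _
      rw [hP1def]; ring
    · have e1 : f o1 o2 = 0 := by simp [hf, h12, h13, h23, ne21, ne31, ne32]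
      have e2 : f o2 o2 = 0 := by simp [hf, h12, h13, h23, ne21, ne31, ne32]
      have e3 : f o3 o2 = P2 - m := f32
      have e4 : f o2 o1 = P1 - m := f21
      have e5 : f o2 o3 = 0 := by simp [hf, h12, h13, h23, ne21, ne31, ne32]
      rw [e1, e2, e3, e4, e5]
      show D o2 = _
      rw [hP2def, hP1def]; ring
    · have e1 : f o1 o3 = 0 := by simp [hf, h12, h13, h23, ne21, ne31, ne32]
      have e2 : f o2 o3 = 0 := by simp [hf, h12, h13, h23, ne21, ne31, ne32]
      have e3 : f o3 o3 = 0 := by simp [hf, h12, h13, h23, ne21, ne31, ne32]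
      have e4 : f o3 o1 = m := f31
      have e5 : f o3 o2 = P2 - m := f32
      rw [e1, e2, e3, e4, e5]
      show D o3 = _
      have h' : P2 = D o1 + D o2 := hP2def
      linarith [htotal]
  · -- strictness
    intro hns
    simp only [SDge, not_forall, not_le] at hns
    obtain ⟨o, ho⟩ := hns
    have hpos : 0 < ∑ o' ∈ univ.filter (fun o' => R o' o), D o' := by
      have heq : ∑ o' ∈ univ.filter (fun o' => R o' o), D o' =
          (∑ o' ∈ univ.filter (fun o' => R o' o), x o') -
          (∑ o' ∈ univ.filter (fun o' => R o' o), y o') := by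
        rw [← Finset.sum_sub_distrib]
      rw [heq]; linarith
    rw [hsplit o] at hpos
    -- case 1 producer
    have case1 : u o2 < u o1 → 0 < P1 → ∃ o o', f o o' ≠ 0 ∧ ¬ R o o' := by
      intro hlt hp
      by_cases hz : f o2 o1 = 0
      · refine ⟨o3, o1, ?_, ?_⟩
        · rw [f31]
          rw [f21] at hz
          have : m = P1 := by linarith [sub_eq_zero.mp hz]  -- hz : P1 - m = 0
          rw [this]; exact ne_of_gt hp
        · rw [hRu]; omega
      · exact ⟨o2, o1, hz, by rw [hRu]; omega⟩
    have case2 : u o3 < u o2 → 0 < P2 → ∃ o o', f o o' ≠ 0 ∧ ¬ R o o' := by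
      intro hlt hp
      by_cases hz : f o3 o1 = 0
      · refine ⟨o3, o2, ?_, ?_⟩
        · rw [f32]
          rw [f31] at hz
          rw [hz] at hmP2 ⊢
          have : P2 - 0 = P2 := by ring
          rw [this]; exact ne_of_gt hp
        · rw [hRu]; omega
      · exact ⟨o3, o1, hz, by rw [hRu]; omega⟩
    -- analyze threshold
    have husome : u o = u o1 ∨ u o = u o2 ∨ u o = u o3 := by
      rcases hcov o with h | h | h
      · exact Or.inl (congrArg u h)
      · exact Or.inr (Or.inl (congrArg u h))
      · exact Or.inr (Or.inr (congrArg u h))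
    rcases eq_or_lt_of_le u21 with he1 | hl1
    · -- u o1 = u o2
      rcases eq_or_lt_of_le u32 with he2 | hl2
      · -- all equal: filter is everything, sum zero: contradiction
        exfalso
        have h1 : u o ≤ u o1 := by omega
        have h2 : u o ≤ u o2 := by omega
        have h3 : u o ≤ u o3 := by omega
        rw [if_pos h1, if_pos h2, if_pos h3] at hpos
        linarith
      · -- u1 = u2 > u3
        rcases husome with he | he | he
        · by_cases h3 : u o ≤ u o3
          · exfalso
            rw [if_pos (by omega), if_pos (by omega), if_pos h3] at hpos
            linarith
          · rw [if_pos (by omega), if_pos (by omega), if_neg h3] at hpos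
            exact case2 hl2 (by rw [hP2def]; linarith)
        · by_cases h3 : u o ≤ u o3
          · exfalso
            rw [if_pos (by omega), if_pos (by omega), if_pos h3] at hpos
            linarith
          · rw [if_pos (by omega), if_pos (by omega), if_neg h3] at hpos
            exact case2 hl2 (by rw [hP2def]; linarith)
        · exfalso
          rw [if_pos (by omega), if_pos (by omega), if_pos (by omega)] at hpos
          linarith
    · -- u1 > u2
      rcases eq_or_lt_of_le u32 with he2 | hl2
      · -- u1 > u2 = u3
        rcases husome with he | he | he
        · rw [if_pos (by omega), if_neg (by omega), if_neg (by omega)] at hpos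
          exact case1 hl1 (by rw [hP1def]; linarith)
        · exfalso
          rw [if_pos (by omega), if_pos (by omega), if_pos (by omega)] at hpos
          linarith
        · exfalso
          rw [if_pos (by omega), if_pos (by omega), if_pos (by omega)] at hpos
          linarith
      · -- strict everywhere
        rcases husome with he | he | he
        · rw [if_pos (by omega), if_neg (by omega), if_neg (by omega)] at hpos
          exact case1 hl1 (by rw [hP1def]; linarith)
        · rw [if_pos (by omega), if_pos (by omega), if_neg (by omega)] at hpos
          exact case2 hl2 (by rw [hP2def]; linarith)
        · exfalso
          rw [if_pos (by omega), if_pos (by omega), if_pos (by omega)] at hpos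
          linarith


lemma fin3_cases (a b : Fin 3) (hab : a ≠ b) :
    ∃ c, c ≠ a ∧ c ≠ b ∧ ∀ x : Fin 3, x = a ∨ x = b ∨ x = c := by
  revert hab; revert a b; decide

lemma support_perm {w : Equiv.Perm (Fin 3) → ℝ} (hw0 : ∀ σ, 0 ≤ w σ)
    {p : Fin 3 → Fin 3 → ℝ} (hdec : ∀ i o, p i o = ∑ σ, w σ * permMatrix σ i o)
    {i a : Fin 3} (h : 0 < p i a) : ∃ σ, w σ ≠ 0 ∧ σ i = a := by
  rw [hdec] at h
  by_contra hc
  push_neg at hc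
  have hz : ∀ σ ∈ (univ : Finset (Equiv.Perm (Fin 3))), w σ * permMatrix σ i a = 0 := by
    intro σ _
    by_cases hσ : w σ = 0
    · rw [hσ, zero_mul]
    · have : σ i ≠ a := hc σ hσ
      simp [permMatrix, this]
  rw [Finset.sum_eq_zero hz] at h
  exact lt_irrefl 0 h

lemma twocycle (R : Fin 3 → Fin 3 → Fin 3 → Prop) (hR : ∀ i, IsPref (R i))
    (p : Fin 3 → Fin 3 → ℝ) (hep : ExPostEfficient R p)
    (i j : Fin 3) (a b : Fin 3) (hpa : 0 < p i a) (hpb : 0 < p j b)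
    (hba : R i b a) (hnab : ¬ R i a b) (hab : R j a b) : False := by
  obtain ⟨w, hw0, hw1, hPO, hdec⟩ := hep
  have hrefl : ∀ l o, R l o o := fun l o => ((hR l).1 o o).elim id id
  have hij : i ≠ j := by
    intro h; subst h; exact hnab hab
  have hobj : a ≠ b := by
    intro h; subst h; exact hnab (hrefl i a)
  obtain ⟨k, hki, hkj, hagents⟩ := fin3_cases i j hij
  obtain ⟨c, hca, hcb, hobjs⟩ := fin3_cases a b hobj
  obtain ⟨σ, hσw, hσi⟩ := support_perm hw0 hdec hpa
  have hdom : ∀ (μ : Equiv.Perm (Fin 3)), w μ ≠ 0 → ∀ τ : Equiv.Perm (Fin 3),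
      (∀ l, R l (τ l) (μ l)) → (∃ l, ¬ R l (μ l) (τ l)) → False := by
    intro μ hμ τ h1 h2
    exact hPO μ hμ ⟨τ, h1, h2⟩
  have hσj : σ j = c ∨ σ j = b := by
    rcases hobjs (σ j) with h | h | h
    · exact absurd (σ.injective (h.trans hσi.symm)) hij.symm
    · right; exact h
    · left; exact h
  rcases hσj with hσj | hσj
  · -- σ = (i→a, j→c, k→b)
    have hσk : σ k = b := by
      rcases hobjs (σ k) with h | h | h
      · exact absurd (σ.injective (h.trans hσi.symm)) hki
      · exact h
      · exact absurd (σ.injective (h.trans hσj.symm)) hkj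
    -- derive ¬ R k a b
    have hkab : ¬ R k a b := by
      intro hX
      refine hdom σ hσw ((Equiv.swap i k).trans σ) ?_ ⟨i, ?_⟩
      · intro l
        rcases hagents l with h | h | h <;> rw [h]
        · simp only [Equiv.trans_apply, Equiv.swap_apply_left, hσk, hσi]
          exact hba
        · simp only [Equiv.trans_apply, Equiv.swap_apply_of_ne_of_ne hij.symm hkj.symm]
          exact hrefl j (σ j)
        · simp only [Equiv.trans_apply, Equiv.swap_apply_right, hσk, hσi]
          exact hX
      · simp only [Equiv.trans_apply, Equiv.swap_apply_left, hσk, hσi]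
        exact hnab
    have hkba : R k b a := ((hR k).1 a b).resolve_left hkab
    obtain ⟨τ, hτw, hτj⟩ := support_perm hw0 hdec hpb
    have hτi : τ i = a ∨ τ i = c := by
      rcases hobjs (τ i) with h | h | h
      · left; exact h
      · exact absurd (τ.injective (h.trans hτj.symm)) hij
      · right; exact h
    rcases hτi with hτi | hτi
    · -- dominate τ by swapping i j
      refine hdom τ hτw ((Equiv.swap i j).trans τ) ?_ ⟨i, ?_⟩
      · intro l
        rcases hagents l with h | h | h <;> rw [h]
        · simp only [Equiv.trans_apply, Equiv.swap_apply_left, hτj, hτi]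
          exact hba
        · simp only [Equiv.trans_apply, Equiv.swap_apply_right, hτj, hτi]
          exact hab
        · simp only [Equiv.trans_apply, Equiv.swap_apply_of_ne_of_ne hki hkj]
          exact hrefl k (τ k)
      · simp only [Equiv.trans_apply, Equiv.swap_apply_left, hτj, hτi]
        exact hnab
    · -- τ = (i→c, j→b, k→a); dominate via swap j k
      have hτk : τ k = a := by
        rcases hobjs (τ k) with h | h | h
        · exact h
        · exact absurd (τ.injective (h.trans hτj.symm)) hkj
        · exact absurd (τ.injective (h.trans hτi.symm)) hki
      refine hdom τ hτw ((Equiv.swap j k).trans τ) ?_ ⟨k, ?_⟩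
      · intro l
        rcases hagents l with h | h | h <;> rw [h]
        · simp only [Equiv.trans_apply, Equiv.swap_apply_of_ne_of_ne hij hki.symm]
          exact hrefl i (τ i)
        · simp only [Equiv.trans_apply, Equiv.swap_apply_left, hτj, hτk]
          exact hab
        · simp only [Equiv.trans_apply, Equiv.swap_apply_right, hτj, hτk]
          exact hkba
      · simp only [Equiv.trans_apply, Equiv.swap_apply_right, hτj, hτk]
        exact hkab
  · -- σ j = b : dominate σ by swapping i j
    refine hdom σ hσw ((Equiv.swap i j).trans σ) ?_ ⟨i, ?_⟩
    · intro l
      rcases hagents l with h | h | h <;> rw [h]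
      · simp only [Equiv.trans_apply, Equiv.swap_apply_left, hσj, hσi]
        exact hba
      · simp only [Equiv.trans_apply, Equiv.swap_apply_right, hσj, hσi]
        exact hab
      · simp only [Equiv.trans_apply, Equiv.swap_apply_of_ne_of_ne hki hkj]
        exact hrefl k (σ k)
    · simp only [Equiv.trans_apply, Equiv.swap_apply_left, hσj, hσi]
      exact hnab

lemma threecycle (R : Fin 3 → Fin 3 → Fin 3 → Prop) (hR : ∀ i, IsPref (R i))
    (p : Fin 3 → Fin 3 → ℝ) (hep : ExPostEfficient R p)
    (i1 i2 i3 : Fin 3) (a b c : Fin 3)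
    (hab : a ≠ b) (hac : a ≠ c) (hbc : b ≠ c)
    (h1 : 0 < p i1 a) (h2 : 0 < p i2 b) (h3 : 0 < p i3 c)
    (hR1 : R i1 b a) (hR1s : ¬ R i1 a b) (hR2 : R i2 c b) (hR3 : R i3 a c) : False := by
  have hrefl : ∀ l o, R l o o := fun l o => ((hR l).1 o o).elim id id
  by_cases h12 : i1 = i2
  · -- merge: agent i1 owns a, strictly prefers c
    subst h12
    have hca : R i1 c a := (hR i1).2 hR2 hR1
    have hnac : ¬ R i1 a c := fun h => hR1s ((hR i1).2 h hR2)
    exact twocycle R hR p hep i1 i3 a c h1 h3 hca hnac hR3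
  by_cases h23 : i2 = i3
  · -- agent i2 owns b: R i2 a b
    subst h23
    have hab' : R i2 a b := (hR i2).2 hR3 hR2
    exact twocycle R hR p hep i1 i2 a b h1 h2 hR1 hR1s hab'
  by_cases h13 : i1 = i3
  · -- agent i1 owns c, strictly prefers b; i2 gives weak edge b→c
    subst h13
    have hbc' : R i1 b c := (hR i1).2 hR1 hR3
    have hncb : ¬ R i1 c b := fun h => hR1s ((hR i1).2 hR3 h)
    exact twocycle R hR p hep i1 i2 c b h3 h2 hbc' hncb hR2
  -- all agents distinct
  obtain ⟨w, hw0, hw1, hPO, hdec⟩ := hep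
  have hdom : ∀ (μ : Equiv.Perm (Fin 3)), w μ ≠ 0 → ∀ τ : Equiv.Perm (Fin 3),
      (∀ l, R l (τ l) (μ l)) → (∃ l, ¬ R l (μ l) (τ l)) → False := by
    intro μ hμ τ hh1 hh2
    exact hPO μ hμ ⟨τ, hh1, hh2⟩
  have hagents : ∀ l : Fin 3, l = i1 ∨ l = i2 ∨ l = i3 := by
    obtain ⟨k, hk1, hk2, hkcov⟩ := fin3_cases i1 i2 h12
    have hk3 : i3 = k := by
      rcases hkcov i3 with h | h | h
      · exact absurd h.symm h13
      · exact absurd h.symm h23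
      · exact h
    intro l
    rcases hkcov l with h | h | h
    · exact Or.inl h
    · exact Or.inr (Or.inl h)
    · exact Or.inr (Or.inr (h.trans hk3.symm))
  have hobjs : ∀ o : Fin 3, o = a ∨ o = b ∨ o = c := by
    obtain ⟨k, hk1, hk2, hkcov⟩ := fin3_cases a b hab
    have hk3 : c = k := by
      rcases hkcov c with h | h | h
      · exact absurd h.symm hac
      · exact absurd h.symm hbc
      · exact h
    intro o
    rcases hkcov o with h | h | h
    · exact Or.inl h
    · exact Or.inr (Or.inl h)
    · exact Or.inr (Or.inr (h.trans hk3.symm))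
  -- no support perm maps i1→a and i2→b
  have noABC : ∀ σ : Equiv.Perm (Fin 3), w σ ≠ 0 → σ i1 = a → σ i2 ≠ b := by
    intro σ hσw hσ1 hσ2
    have hσ3 : σ i3 = c := by
      rcases hobjs (σ i3) with h | h | h
      · exact absurd (σ.injective (h.trans hσ1.symm)) (Ne.symm h13)
      · exact absurd (σ.injective (h.trans hσ2.symm)) (Ne.symm h23)
      · exact h
    set cyc : Equiv.Perm (Fin 3) := (Equiv.swap i2 i3).trans (Equiv.swap i1 i2) with hcyc
    have hc1 : cyc i1 = i2 := by
      simp only [hcyc, Equiv.trans_apply, Equiv.swap_apply_of_ne_of_ne h12 h13,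
        Equiv.swap_apply_left]
    have hc2 : cyc i2 = i3 := by
      simp only [hcyc, Equiv.trans_apply, Equiv.swap_apply_left,
        Equiv.swap_apply_of_ne_of_ne (Ne.symm h13) (Ne.symm h23)]
    have hc3 : cyc i3 = i1 := by
      simp only [hcyc, Equiv.trans_apply, Equiv.swap_apply_right,
        Equiv.swap_apply_right]
    refine hdom σ hσw (cyc.trans σ) ?_ ⟨i1, ?_⟩
    · intro l
      rcases hagents l with h | h | h <;> rw [h] <;>
        simp only [Equiv.trans_apply, hc1, hc2, hc3, hσ1, hσ2, hσ3]
      · exact hR1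
      · exact hR2
      · exact hR3
    · simp only [Equiv.trans_apply, hc1, hσ1, hσ2]
      exact hR1s
  obtain ⟨σ, hσw, hσ1⟩ := support_perm hw0 hdec h1
  have hσ2 : σ i2 = c := by
    rcases hobjs (σ i2) with h | h | h
    · exact absurd (σ.injective (h.trans hσ1.symm)) (Ne.symm h12)
    · exact absurd h (noABC σ hσw hσ1)
    · exact h
  have hσ3 : σ i3 = b := by
    rcases hobjs (σ i3) with h | h | h
    · exact absurd (σ.injective (h.trans hσ1.symm)) (Ne.symm h13)
    · exact h
    · exact absurd (σ.injective (h.trans hσ2.symm)) (Ne.symm h23)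
  -- F4 : ¬ R i3 a b
  have hn3ab : ¬ R i3 a b := by
    intro hX
    refine hdom σ hσw ((Equiv.swap i1 i3).trans σ) ?_ ⟨i1, ?_⟩
    · intro l
      rcases hagents l with h | h | h <;> rw [h]
      · simp only [Equiv.trans_apply, Equiv.swap_apply_left, hσ3, hσ1]
        exact hR1
      · simp only [Equiv.trans_apply,
          Equiv.swap_apply_of_ne_of_ne (Ne.symm h12) h23]
        exact hrefl i2 (σ i2)
      · simp only [Equiv.trans_apply, Equiv.swap_apply_right, hσ3, hσ1]
        exact hX
    · simp only [Equiv.trans_apply, Equiv.swap_apply_left, hσ3, hσ1]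
      exact hR1s
  have h3ba : R i3 b a := ((hR i3).1 a b).resolve_left hn3ab
  obtain ⟨τ, hτw, hτ2⟩ := support_perm hw0 hdec h2
  have hτ1 : τ i1 = c := by
    rcases hobjs (τ i1) with h | h | h
    · exact absurd hτ2 (noABC τ hτw h)
    · exact absurd (τ.injective (h.trans hτ2.symm)) h12
    · exact h
  have hτ3 : τ i3 = a := by
    rcases hobjs (τ i3) with h | h | h
    · exact h
    · exact absurd (τ.injective (h.trans hτ2.symm)) (Ne.symm h23)
    · exact absurd (τ.injective (h.trans hτ1.symm)) (Ne.symm h13)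
  -- F5 : ¬ R i2 a b
  have hn2ab : ¬ R i2 a b := by
    intro hX
    refine hdom τ hτw ((Equiv.swap i2 i3).trans τ) ?_ ⟨i3, ?_⟩
    · intro l
      rcases hagents l with h | h | h <;> rw [h]
      · simp only [Equiv.trans_apply, Equiv.swap_apply_of_ne_of_ne h12 h13]
        exact hrefl i1 (τ i1)
      · simp only [Equiv.trans_apply, Equiv.swap_apply_left, hτ2, hτ3]
        exact hX
      · simp only [Equiv.trans_apply, Equiv.swap_apply_right, hτ2, hτ3]
        exact h3ba
    · simp only [Equiv.trans_apply, Equiv.swap_apply_right, hτ2, hτ3]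
      exact hn3ab
  have h2ba : R i2 b a := ((hR i2).1 a b).resolve_left hn2ab
  have h2ca : R i2 c a := (hR i2).2 hR2 h2ba
  have hn2ac : ¬ R i2 a c := fun h => hn2ab ((hR i2).2 h hR2)
  obtain ⟨ρ, hρw, hρ3⟩ := support_perm hw0 hdec h3
  have hρ1 : ρ i1 = b := by
    rcases hobjs (ρ i1) with h | h | h
    · -- ρ i1 = a forces ρ i2 = b, contradicting noABC
      exfalso
      have hρ2 : ρ i2 = b := by
        rcases hobjs (ρ i2) with h' | h' | h'
        · exact absurd (ρ.injective (h'.trans h.symm)) (Ne.symm h12)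
        · exact h'
        · exact absurd (ρ.injective (h'.trans hρ3.symm)) h23
      exact noABC ρ hρw h hρ2
    · exact h
    · exact absurd (ρ.injective (h.trans hρ3.symm)) h13
  have hρ2 : ρ i2 = a := by
    rcases hobjs (ρ i2) with h | h | h
    · exact h
    · exact absurd (ρ.injective (h.trans hρ1.symm)) (Ne.symm h12)
    · exact absurd (ρ.injective (h.trans hρ3.symm)) h23
  refine hdom ρ hρw ((Equiv.swap i2 i3).trans ρ) ?_ ⟨i2, ?_⟩
  · intro l
    rcases hagents l with h | h | h <;> rw [h]
    · simp only [Equiv.trans_apply, Equiv.swap_apply_of_ne_of_ne h12 h13]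
      exact hrefl i1 (ρ i1)
    · simp only [Equiv.trans_apply, Equiv.swap_apply_left, hρ2, hρ3]
      exact h2ca
    · simp only [Equiv.trans_apply, Equiv.swap_apply_right, hρ2, hρ3]
      exact hR3
  · simp only [Equiv.trans_apply, Equiv.swap_apply_left, hρ2, hρ3]
    exact hn2ac


lemma dirA (R : Fin 3 → Fin 3 → Fin 3 → Prop) (hR : ∀ i, IsPref (R i))
    (p : Fin 3 → Fin 3 → ℝ) (hp : IsRandomAssignment p) (hsd : SDEfficient R p) :
    ExPostEfficient R p := by
  have hrefl : ∀ l o, R l o o := fun l o => ((hR l).1 o o).elim id id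
  obtain ⟨w, hw0, hw1, hweq⟩ := exists_eq_sum_perm_of_mem_doublyStochastic
    (mem_doublyStochastic_iff_sum.mpr
      ⟨fun i j => hp.1 i j, fun i => hp.2.1 i, fun j => hp.2.2 j⟩ :
      (Matrix.of p) ∈ doublyStochastic ℝ (Fin 3))
  have hdec : ∀ i o, p i o = ∑ σ : Equiv.Perm (Fin 3), w σ * permMatrix σ i o := by
    intro i o
    have h := congrFun (congrFun hweq i) o
    rw [Matrix.sum_apply] at h
    have : ∀ σ : Equiv.Perm (Fin 3), (w σ • σ.permMatrix ℝ) i o = w σ * permMatrix σ i o := by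
      intro σ
      simp [Equiv.Perm.permMatrix, PEquiv.toMatrix_apply, Equiv.toPEquiv_apply,
        permMatrix, eq_comm]
    rw [Finset.sum_congr rfl (fun σ _ => this σ)] at h
    exact h.symm
  refine ⟨w, hw0, hw1, ?_, hdec⟩
  intro σ0 hσ0
  by_contra hPO
  rw [ParetoOptimalPerm, not_not] at hPO
  obtain ⟨τ0, hweak, istar, hstrict⟩ := hPO
  have hwpos : 0 < w σ0 := lt_of_le_of_ne (hw0 σ0) (Ne.symm hσ0)
  have hterm_nonneg : ∀ (i o : Fin 3) (σ : Equiv.Perm (Fin 3)),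
      0 ≤ w σ * permMatrix σ i o := by
    intro i o σ
    apply mul_nonneg (hw0 σ)
    unfold permMatrix; split_ifs <;> norm_num
  have hlow : ∀ i o, σ0 i = o → w σ0 ≤ p i o := by
    intro i o h
    rw [hdec i o]
    have := Finset.single_le_sum (f := fun σ => w σ * permMatrix σ i o)
      (fun σ _ => hterm_nonneg i o σ) (Finset.mem_univ σ0)
    simpa [permMatrix, h] using this
  set q : Fin 3 → Fin 3 → ℝ := fun i o =>
    p i o + w σ0 * ((if τ0 i = o then 1 else 0) - (if σ0 i = o then 1 else 0)) with hq
  have hsum1 : ∀ (τ : Equiv.Perm (Fin 3)) (i : Fin 3),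
      ∑ o, (if τ i = o then (1:ℝ) else 0) = 1 := by
    intro τ i
    rw [Finset.sum_ite_eq]
    simp
  have hsumcol : ∀ (τ : Equiv.Perm (Fin 3)) (o : Fin 3),
      ∑ i, (if τ i = o then (1:ℝ) else 0) = 1 := by
    intro τ o
    have : ∀ i, (if τ i = o then (1:ℝ) else 0) = (if i = τ.symm o then (1:ℝ) else 0) := by
      intro i
      congr 1
      simp [Equiv.apply_eq_iff_eq_symm_apply]
    rw [Finset.sum_congr rfl (fun i _ => this i), Finset.sum_ite_eq']
    simp
  have hqRA : IsRandomAssignment q := by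
    refine ⟨?_, ?_, ?_⟩
    · intro i o
      simp only [hq]
      by_cases h : σ0 i = o
      · have := hlow i o h
        rw [if_pos h]
        split_ifs <;> linarith
      · rw [if_neg h]
        have := hp.1 i o
        split_ifs <;> linarith
    · intro i
      simp only [hq]
      rw [Finset.sum_add_distrib, hp.2.1 i, ← Finset.mul_sum, Finset.sum_sub_distrib,
        hsum1 τ0 i, hsum1 σ0 i]
      ring
    · intro o
      simp only [hq]
      rw [Finset.sum_add_distrib, hp.2.2 o, ← Finset.mul_sum, Finset.sum_sub_distrib,
        hsumcol τ0 o, hsumcol σ0 o]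
      ring
  have hkey : ∀ (i : Fin 3) (o : Fin 3),
      ∑ o' ∈ univ.filter (fun o' => R i o' o), q i o' =
      (∑ o' ∈ univ.filter (fun o' => R i o' o), p i o') +
        w σ0 * ((if R i (τ0 i) o then 1 else 0) - (if R i (σ0 i) o then 1 else 0)) := by
    intro i o
    simp only [hq]
    have e1 : ∑ o' ∈ univ.filter (fun o' => R i o' o), (if τ0 i = o' then (1:ℝ) else 0)
        = (if R i (τ0 i) o then 1 else 0) := by
      rw [Finset.sum_ite_eq]
      simp only [Finset.mem_filter, Finset.mem_univ, true_and]
    have e2 : ∑ o' ∈ univ.filter (fun o' => R i o' o), (if σ0 i = o' then (1:ℝ) else 0)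
        = (if R i (σ0 i) o then 1 else 0) := by
      rw [Finset.sum_ite_eq]
      simp only [Finset.mem_filter, Finset.mem_univ, true_and]
    rw [Finset.sum_add_distrib, ← Finset.mul_sum, Finset.sum_sub_distrib, e1, e2]
  have hge : ∀ i, SDge (R i) (q i) (p i) := by
    intro i o
    rw [hkey i o]
    by_cases h : R i (σ0 i) o
    · have h' : R i (τ0 i) o := (hR i).2 (hweak i) h
      rw [if_pos h, if_pos h']
      simp
    · rw [if_neg h]
      have : (0:ℝ) ≤ (if R i (τ0 i) o then (1:ℝ) else 0) := by split_ifs <;> norm_num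
      nlinarith
  refine hsd ⟨q, hqRA, hge, istar, hge istar, ?_⟩
  intro hcon
  have h1 := hcon (τ0 istar)
  rw [hkey istar (τ0 istar), if_pos (hrefl istar (τ0 istar)), if_neg hstrict] at h1
  nlinarith


lemma dirB (R : Fin 3 → Fin 3 → Fin 3 → Prop) (hR : ∀ i, IsPref (R i))
    (p : Fin 3 → Fin 3 → ℝ) (hp : IsRandomAssignment p) (hep : ExPostEfficient R p) :
    SDEfficient R p := by
  rintro ⟨q, hqRA, hge, i0, hgt⟩
  have hflows : ∀ i, ∃ f : Fin 3 → Fin 3 → ℝ,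
      (∀ o o', 0 ≤ f o o') ∧
      (∀ o o', f o o' ≠ 0 → R i o' o ∧ o ≠ o') ∧
      (∀ o, ∑ o', f o o' ≤ p i o) ∧
      (∀ o, q i o - p i o = ∑ o', f o' o - ∑ o', f o o') ∧
      (¬ SDge (R i) (p i) (q i) → ∃ o o', f o o' ≠ 0 ∧ ¬ R i o o') :=
    fun i => flow_lemma (R i) (hR i) (q i) (p i) (fun o => hqRA.1 i o) (fun o => hp.1 i o)
      (by rw [hqRA.2.1 i, hp.2.1 i]) (hge i)
  choose f hf0 hfedge hfcap hfnet hfstr using hflows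
  obtain ⟨a, b, hfab, hnab⟩ := hfstr i0 hgt.2
  obtain ⟨hRba, hane⟩ := hfedge i0 a b hfab
  have hfabpos : 0 < f i0 a b := lt_of_le_of_ne (hf0 i0 a b) (Ne.symm hfab)
  have hple : ∀ i o o', f i o o' ≤ p i o := fun i o o' =>
    le_trans (Finset.single_le_sum (fun o'' _ => hf0 i o o'') (Finset.mem_univ o')) (hfcap i o)
  have hpa : 0 < p i0 a := lt_of_lt_of_le hfabpos (hple i0 a b)
  set F : Fin 3 → Fin 3 → ℝ := fun o o' => ∑ i, f i o o' with hF
  have hF0 : ∀ o o', 0 ≤ F o o' := fun o o' =>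
    Finset.sum_nonneg (fun i _ => hf0 i o o')
  have hcons : ∀ o, ∑ o', F o' o = ∑ o', F o o' := by
    intro o
    have h0 : ∑ i, (q i o - p i o) = 0 := by
      rw [Finset.sum_sub_distrib, hqRA.2.2 o, hp.2.2 o]; ring
    have h1 : ∑ i, (q i o - p i o) =
        ∑ i, (∑ o', f i o' o - ∑ o', f i o o') :=
      Finset.sum_congr rfl (fun i _ => hfnet i o)
    rw [h0] at h1
    rw [Finset.sum_sub_distrib] at h1
    have e1 : ∑ o', F o' o = ∑ i, ∑ o', f i o' o := Finset.sum_comm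
    have e2 : ∑ o', F o o' = ∑ i, ∑ o', f i o o' := Finset.sum_comm
    rw [e1, e2]
    linarith
  obtain ⟨c, hca, hcb, hobjs⟩ := fin3_cases a b hane
  have sum3 : ∀ g : Fin 3 → ℝ, ∑ o, g o = g a + g b + g c := by
    intro g
    have : (univ : Finset (Fin 3)) = {a, b, c} := by
      ext z; simp only [mem_univ, mem_insert, mem_singleton, true_iff]; exact hobjs z
    rw [this, Finset.sum_insert (by simp [hane, Ne.symm hca]),
      Finset.sum_insert (by simp [Ne.symm hcb]), Finset.sum_singleton, add_assoc]
  have pick : ∀ o o', 0 < F o o' → ∃ i, R i o' o ∧ 0 < p i o := by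
    intro o o' hpos
    have hex : ∃ i ∈ (univ : Finset (Fin 3)), f i o o' ≠ 0 := by
      by_contra hcl
      push_neg at hcl
      have : F o o' = 0 := Finset.sum_eq_zero (fun i hi => hcl i hi)
      linarith
    obtain ⟨i, _, hi⟩ := hex
    have hedge := hfedge i o o' hi
    have hppos : 0 < p i o :=
      lt_of_lt_of_le (lt_of_le_of_ne (hf0 i o o') (Ne.symm hi)) (hple i o o')
    exact ⟨i, hedge.1, hppos⟩
  have hFab : 0 < F a b :=
    lt_of_lt_of_le hfabpos (Finset.single_le_sum (fun i _ => hf0 i a b) (Finset.mem_univ i0))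
  by_cases hFba : 0 < F b a
  · obtain ⟨i, hRab, hpb⟩ := pick b a hFba
    exact twocycle R hR p hep i0 i a b hpa hpb hRba hnab hRab
  · have hFba0 : F b a = 0 := le_antisymm (not_lt.mp hFba) (hF0 b a)
    have hb := hcons b
    rw [sum3 (fun o' => F o' b), sum3 (fun o' => F b o')] at hb
    have hFbc : 0 < F b c := by
      have := hF0 c b
      linarith
    have ha := hcons a
    rw [sum3 (fun o' => F o' a), sum3 (fun o' => F a o')] at ha
    have hFca : 0 < F c a := by
      have := hF0 a c
      linarith
    obtain ⟨i2, hR2, hpb2⟩ := pick b c hFbc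
    obtain ⟨i3, hR3, hpc⟩ := pick c a hFca
    exact threecycle R hR p hep i0 i2 i3 a b c hane (Ne.symm hca) (Ne.symm hcb)
      hpa hpb2 hpc hRba hnab hR2 hR3

end Aux

/-- For `n = 3`, allowing indifferences, ex post efficiency coincides with
SD-efficiency. -/
theorem stmt2 (R : Fin 3 → Fin 3 → Fin 3 → Prop) (hR : ∀ i, IsPref (R i))
    (p : Fin 3 → Fin 3 → ℝ) (hp : IsRandomAssignment p) :
    ExPostEfficient R p ↔ SDEfficient R p := by
  exact ⟨fun hep => dirB R hR p hp hep, fun hsd => dirA R hR p hp hsd⟩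
end

section
/- Every SD-efficient random assignment is ex post efficient. -/
open Finset
open scoped Classical

lemma permMatrix_eq {n : ℕ} (σ : Equiv.Perm (Fin n)) (i o : Fin n) :
    σ.permMatrix ℝ i o = permMatrix σ i o := by
  simp [Equiv.Perm.permMatrix, PEquiv.toMatrix_apply, Equiv.toPEquiv_apply, permMatrix]

lemma col_sum_permMatrix {n : ℕ} (σ : Equiv.Perm (Fin n)) (o : Fin n) :
    ∑ i, permMatrix σ i o = 1 := by
  have : ∀ i : Fin n, permMatrix σ i o = if i = σ.symm o then (1:ℝ) else 0 := fun i => by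
    simp only [permMatrix, Equiv.apply_eq_iff_eq_symm_apply]
  simp [this]

lemma row_sum_permMatrix {n : ℕ} (σ : Equiv.Perm (Fin n)) (i : Fin n) :
    ∑ o, permMatrix σ i o = 1 := by
  simp [permMatrix]

lemma filter_sum_permMatrix {n : ℕ} (σ : Equiv.Perm (Fin n)) (i : Fin n)
    (s : Finset (Fin n)) :
    ∑ o' ∈ s, permMatrix σ i o' = if σ i ∈ s then 1 else 0 := by
  simp only [permMatrix]
  rw [Finset.sum_ite_eq]

/-- Every SD-efficient random assignment is ex post efficient. -/
theorem stmt5 {n : ℕ} (R : Fin n → Fin n → Fin n → Prop) (hR : ∀ i, IsPref (R i))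
    (p : Fin n → Fin n → ℝ) (hp : IsRandomAssignment p)
    (h : SDEfficient R p) : ExPostEfficient R p := by
  have hrefl : ∀ i x, R i x x := fun i x => ((hR i).1 x x).elim id id
  -- p is doubly stochastic as a matrix
  have hmem : (Matrix.of p) ∈ doublyStochastic ℝ (Fin n) := by
    rw [mem_doublyStochastic_iff_sum]
    exact ⟨hp.1, hp.2.1, hp.2.2⟩
  obtain ⟨w, hw0, hw1, hwsum⟩ := exists_eq_sum_perm_of_mem_doublyStochastic hmem
  have hdecomp : ∀ i o, p i o = ∑ σ, w σ * permMatrix σ i o := by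
    intro i o
    have := congrFun (congrFun hwsum i) o
    rw [Matrix.sum_apply] at this
    calc p i o = ∑ c : Equiv.Perm (Fin n), (w c • Equiv.Perm.permMatrix ℝ c) i o := this.symm
      _ = _ := Finset.sum_congr rfl fun σ _ => by
            rw [Matrix.smul_apply, permMatrix_eq, smul_eq_mul]
  refine ⟨w, hw0, hw1, ?_, hdecomp⟩
  -- Every permutation in the support is Pareto optimal
  intro σ hσ
  by_contra hpo
  simp only [ParetoOptimalPerm, not_not] at hpo
  obtain ⟨τ, hτ, i0, hi0⟩ := hpo
  have hwσ : 0 < w σ := lt_of_le_of_ne (hw0 σ) (Ne.symm hσ)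
  have hστ : σ ≠ τ := by
    intro he; exact hi0 (he ▸ hrefl i0 (σ i0))
  -- new weights: move the weight of σ to τ
  set w' : Equiv.Perm (Fin n) → ℝ :=
    fun σ' => if σ' = σ then 0 else if σ' = τ then w τ + w σ else w σ' with hw'def
  have hw'0 : ∀ σ', 0 ≤ w' σ' := by
    intro σ'
    simp only [hw'def]
    split_ifs
    · exact le_refl 0
    · exact add_nonneg (hw0 τ) (hw0 σ)
    · exact hw0 σ'
  have hw'w : ∀ σ', w' σ' = w σ' +
      w σ * ((if σ' = τ then (1:ℝ) else 0) - (if σ' = σ then 1 else 0)) := by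
    intro σ'
    simp only [hw'def]
    by_cases h1 : σ' = σ
    · subst h1
      rw [if_pos rfl, if_pos rfl, if_neg hστ]
      ring
    · rw [if_neg h1, if_neg h1]
      by_cases h2 : σ' = τ
      · subst h2; rw [if_pos rfl, if_pos rfl]; ring
      · rw [if_neg h2, if_neg h2]; ring
  set q : Fin n → Fin n → ℝ := fun i o => ∑ σ', w' σ' * permMatrix σ' i o with hqdef
  have hqp : ∀ i o, q i o = p i o + w σ * (permMatrix τ i o - permMatrix σ i o) := by
    intro i o
    rw [hqdef, hdecomp i o]
    simp only
    rw [Finset.sum_congr rfl (fun σ' _ => by rw [hw'w σ'])]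
    simp only [add_mul, sub_mul, mul_assoc]
    rw [Finset.sum_add_distrib, ← Finset.mul_sum, Finset.sum_sub_distrib]
    congr 1
    simp only [ite_mul, one_mul, zero_mul]
    rw [Finset.sum_ite_eq' Finset.univ τ (fun σ' => permMatrix σ' i o),
        Finset.sum_ite_eq' Finset.univ σ (fun σ' => permMatrix σ' i o)]
    simp
  -- q is a random assignment
  have hq : IsRandomAssignment q := by
    refine ⟨fun i o => Finset.sum_nonneg fun σ' _ => mul_nonneg (hw'0 σ') ?_, ?_, ?_⟩
    · simp only [permMatrix]; split_ifs <;> norm_num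
    · intro i
      rw [hqdef]
      simp only
      rw [Finset.sum_comm]
      have : ∀ σ' : Equiv.Perm (Fin n), ∑ o, w' σ' * permMatrix σ' i o = w' σ' := by
        intro σ'; rw [← Finset.mul_sum, row_sum_permMatrix, mul_one]
      rw [Finset.sum_congr rfl fun σ' _ => this σ']
      rw [Finset.sum_congr rfl (fun σ' _ => hw'w σ')]
      rw [Finset.sum_add_distrib, hw1, ← Finset.mul_sum, Finset.sum_sub_distrib]
      simp
    · intro o
      have : ∀ i, q i o = p i o + w σ * (permMatrix τ i o - permMatrix σ i o) := fun i => hqp i o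
      rw [Finset.sum_congr rfl fun i _ => this i]
      rw [Finset.sum_add_distrib, hp.2.2 o, ← Finset.mul_sum, Finset.sum_sub_distrib,
        col_sum_permMatrix, col_sum_permMatrix]
      ring
  -- cumulative difference formula
  have hcum : ∀ (i o : Fin n),
      ∑ o' ∈ Finset.univ.filter (fun o' => R i o' o), q i o' =
      ∑ o' ∈ Finset.univ.filter (fun o' => R i o' o), p i o' +
        w σ * ((if R i (τ i) o then (1:ℝ) else 0) - (if R i (σ i) o then 1 else 0)) := by
    intro i o
    rw [Finset.sum_congr rfl fun o' _ => hqp i o']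
    rw [Finset.sum_add_distrib, ← Finset.mul_sum, Finset.sum_sub_distrib,
      filter_sum_permMatrix, filter_sum_permMatrix]
    simp only [Finset.mem_filter, Finset.mem_univ, true_and]
  -- q SD-dominates p
  apply h
  refine ⟨q, hq, ?_, i0, ?_⟩
  · intro i o
    rw [hcum i o]
    have hle : (if R i (σ i) o then (1:ℝ) else 0) ≤ (if R i (τ i) o then 1 else 0) := by
      split_ifs with h1 h2
      · exact le_refl 1
      · exact absurd ((hR i).2 (hτ i) h1) h2
      · norm_num
      · exact le_refl 0
    nlinarith
  · constructor
    · intro o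
      rw [hcum i0 o]
      have hle : (if R i0 (σ i0) o then (1:ℝ) else 0) ≤ (if R i0 (τ i0) o then 1 else 0) := by
        split_ifs with h1 h2
        · exact le_refl 1
        · exact absurd ((hR i0).2 (hτ i0) h1) h2
        · norm_num
        · exact le_refl 0
      nlinarith
    · intro hge
      have := hge (τ i0)
      rw [hcum i0 (τ i0)] at this
      rw [if_pos (hrefl i0 (τ i0)), if_neg hi0] at this
      nlinarith
end

section
/- Let N = {1,2,3}, O = {a,b,c}, with preferences: agent 1 ranks a ≻ b ≻ c, agent 2 ranks a ≻ c ≻ b, and agent 3 is indifferent between a and b, both strictly preferred to c (i.e., {a,b} ≻ c). Then any SD-efficient random assignment p satisfies p(3)(a) = 0. -/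
open Finset
open scoped Classical

/-- For the profile with agent 1: `a ≻ b ≻ c`, agent 2: `a ≻ c ≻ b`,
agent 3: `{a,b} ≻ c`, every SD-efficient random assignment `p` has `p 3 a = 0`. -/
theorem stmt8 (p : Fin 3 → Fin 3 → ℝ) (hp : IsRandomAssignment p)
    (heff : SDEfficient ![Pabc, Pacb, PabIndiff_c] p) :
    p 2 0 = 0 := by
  by_contra h0
  obtain ⟨hnn, hrow, hcol⟩ := hp
  have hpos : 0 < p 2 0 := lt_of_le_of_ne (hnn 2 0) (Ne.symm h0)
  have hr0 := hrow 0; have hr1 := hrow 1; have hr2 := hrow 2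
  have hc0 := hcol 0; have hc1 := hcol 1; have hc2 := hcol 2
  simp only [Fin.sum_univ_three] at hr0 hr1 hr2 hc0 hc1 hc2
  -- helper notations
  have key : ∀ q : Fin 3 → Fin 3 → ℝ, IsRandomAssignment q →
      (∀ i, SDge (![Pabc, Pacb, PabIndiff_c] i) (q i) (p i)) →
      (∃ i, SDgt (![Pabc, Pacb, PabIndiff_c] i) (q i) (p i)) → False := by
    intro q hq h1 h2
    exact heff ⟨q, hq, h1, h2⟩
  by_cases h01 : 0 < p 0 1
  · -- trade a,b between agents 0 and 2
    set ε := min (p 2 0) (p 0 1) with hε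
    have hε0 : 0 < ε := lt_min hpos h01
    have hε1 : ε ≤ p 2 0 := min_le_left _ _
    have hε2 : ε ≤ p 0 1 := min_le_right _ _
    set q : Fin 3 → Fin 3 → ℝ :=
      ![![p 0 0 + ε, p 0 1 - ε, p 0 2], ![p 1 0, p 1 1, p 1 2],
        ![p 2 0 - ε, p 2 1 + ε, p 2 2]] with hqdef
    apply key q
    · refine ⟨?_, ?_, ?_⟩
      · intro i o; fin_cases i <;> fin_cases o <;> simp [hqdef] <;>
          first
          | linarith [hnn 0 0, hnn 0 2, hnn 1 0, hnn 1 1, hnn 1 2, hnn 2 1, hnn 2 2]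
          | positivity
      · intro i; fin_cases i <;> simp [hqdef, Fin.sum_univ_three] <;> linarith
      · intro o; fin_cases o <;> simp [hqdef, Fin.sum_univ_three] <;> linarith
    · intro i; fin_cases i <;> intro o <;> fin_cases o <;>
        simp [hqdef, Finset.sum_filter, Fin.sum_univ_three, Pabc, Pacb, PabIndiff_c,
          ofRank, Matrix.cons_val_zero, Matrix.cons_val_one] <;> linarith
    · refine ⟨0, ?_, fun hc => ?_⟩
      · intro o; fin_cases o <;>
          simp [hqdef, Finset.sum_filter, Fin.sum_univ_three, Pabc, Pacb, PabIndiff_c,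
            ofRank] <;> linarith
      · have := hc 0
        simp [hqdef, Finset.sum_filter, Fin.sum_univ_three, Pabc, ofRank] at this
        linarith
  · have h01' : p 0 1 = 0 := le_antisymm (not_lt.1 h01) (hnn 0 1)
    have h11 : 0 < p 1 1 := by
      have : p 2 1 ≤ 1 - p 2 0 := by linarith [hnn 2 2]
      rcases lt_or_eq_of_le (hnn 1 1) with h | h
      · exact h
      · exfalso; nlinarith
    by_cases h22 : 0 < p 2 2
    · -- trade b,c between agents 1 and 2
      set ε := min (p 1 1) (p 2 2) with hε
      have hε0 : 0 < ε := lt_min h11 h22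
      have hε1 : ε ≤ p 1 1 := min_le_left _ _
      have hε2 : ε ≤ p 2 2 := min_le_right _ _
      set q : Fin 3 → Fin 3 → ℝ :=
        ![![p 0 0, p 0 1, p 0 2], ![p 1 0, p 1 1 - ε, p 1 2 + ε],
          ![p 2 0, p 2 1 + ε, p 2 2 - ε]] with hqdef
      apply key q
      · refine ⟨?_, ?_, ?_⟩
        · intro i o; fin_cases i <;> fin_cases o <;> simp [hqdef] <;>
            first
            | linarith [hnn 0 0, hnn 0 1, hnn 0 2, hnn 1 0, hnn 1 2, hnn 2 0, hnn 2 1]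
            | positivity
        · intro i; fin_cases i <;> simp [hqdef, Fin.sum_univ_three] <;> linarith
        · intro o; fin_cases o <;> simp [hqdef, Fin.sum_univ_three] <;> linarith
      · intro i; fin_cases i <;> intro o <;> fin_cases o <;>
          simp [hqdef, Finset.sum_filter, Fin.sum_univ_three, Pabc, Pacb, PabIndiff_c,
            ofRank] <;> linarith
      · refine ⟨1, ?_, fun hc => ?_⟩
        · intro o; fin_cases o <;>
            simp [hqdef, Finset.sum_filter, Fin.sum_univ_three, Pacb, ofRank] <;> linarith
        · have := hc 2
          simp [hqdef, Finset.sum_filter, Fin.sum_univ_three, Pacb, ofRank] at this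
          linarith
    · have h22' : p 2 2 = 0 := le_antisymm (not_lt.1 h22) (hnn 2 2)
      have h02 : 0 < p 0 2 := by
        rcases lt_or_eq_of_le (hnn 0 2) with h | h
        · exact h
        · exfalso; nlinarith [hnn 1 0]
      -- trade b,c between agents 0 and 1
      set ε := min (p 0 2) (p 1 1) with hε
      have hε0 : 0 < ε := lt_min h02 h11
      have hε1 : ε ≤ p 0 2 := min_le_left _ _
      have hε2 : ε ≤ p 1 1 := min_le_right _ _
      set q : Fin 3 → Fin 3 → ℝ :=
        ![![p 0 0, p 0 1 + ε, p 0 2 - ε], ![p 1 0, p 1 1 - ε, p 1 2 + ε],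
          ![p 2 0, p 2 1, p 2 2]] with hqdef
      apply key q
      · refine ⟨?_, ?_, ?_⟩
        · intro i o; fin_cases i <;> fin_cases o <;> simp [hqdef] <;>
            first
            | linarith [hnn 0 0, hnn 0 1, hnn 1 0, hnn 1 2, hnn 2 0, hnn 2 1, hnn 2 2]
            | positivity
        · intro i; fin_cases i <;> simp [hqdef, Fin.sum_univ_three] <;> linarith
        · intro o; fin_cases o <;> simp [hqdef, Fin.sum_univ_three] <;> linarith
      · intro i; fin_cases i <;> intro o <;> fin_cases o <;>
          simp [hqdef, Finset.sum_filter, Fin.sum_univ_three, Pabc, Pacb, PabIndiff_c,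
            ofRank] <;> linarith
      · refine ⟨0, ?_, fun hc => ?_⟩
        · intro o; fin_cases o <;>
            simp [hqdef, Finset.sum_filter, Fin.sum_univ_three, Pabc, ofRank] <;> linarith
        · have := hc 1
          simp [hqdef, Finset.sum_filter, Fin.sum_univ_three, Pabc, ofRank] at this
          linarith
end

section
/- In any 3-agent, 3-object problem, no ex post efficient random assignment p (i.e. no p that is a convex combination of Pareto optimal discrete assignments) admits a trading cycle of size two b,1,a,2, where a ≻_1 b, b ≿_2 a, p(1)(b) > 0 and p(2)(a) > 0. -/
open Finset
open scoped Classical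

/-- No ex post efficient random assignment on 3 agents admits a trading
cycle of size two `b, 1, a, 2`: `p 1 b > 0`, `p 2 a > 0`, `a ≻₁ b` and `b ≿₂ a` lead to
a contradiction. -/
theorem stmt10 (R : Fin 3 → Fin 3 → Fin 3 → Prop) (hR : ∀ i, IsPref (R i))
    (p : Fin 3 → Fin 3 → ℝ) (hp : IsRandomAssignment p)
    (hpe : ExPostEfficient R p)
    (a b : Fin 3) (hab : a ≠ b)
    (h1b : 0 < p 0 b) (h2a : 0 < p 1 a)
    (h1 : R 0 a b) (h1s : ¬ R 0 b a) (h2 : R 1 b a) : False := by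
  obtain ⟨w, hw0, hw1, hwPO, hwp⟩ := hpe
  have hrefl : ∀ i x, R i x x := fun i x => ((hR i).1 x x).elim id id
  have key : ∀ i o, 0 < p i o → ∃ σ : Equiv.Perm (Fin 3), w σ ≠ 0 ∧ σ i = o := by
    intro i o hpo
    by_contra h
    push_neg at h
    have hz : p i o = 0 := by
      rw [hwp]
      apply Finset.sum_eq_zero
      intro σ _
      by_cases hσ : w σ = 0
      · simp [hσ]
      · simp [permMatrix, h σ hσ]
    linarith
  obtain ⟨σ, hσw, hσ0⟩ := key 0 b h1b
  obtain ⟨τ, hτw, hτ1⟩ := key 1 a h2a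
  have hσPO := hwPO σ hσw
  have hτPO := hwPO τ hτw
  -- Step 1: ¬ R 2 b a
  have h2ba : ¬ R 2 b a := by
    intro hba
    obtain ⟨j, hj⟩ := σ.surjective a
    rcases show j = 0 ∨ j = 1 ∨ j = 2 by omega with rfl | rfl | rfl
    · exact hab (hj.symm.trans hσ0)
    · -- σ 1 = a : swap agents 0 and 1
      apply hσPO
      refine ⟨σ * Equiv.swap 0 1, ?_, 0, ?_⟩
      · intro i
        fin_cases i
        · simpa [Equiv.Perm.mul_apply, hσ0, hj] using h1
        · simpa [Equiv.Perm.mul_apply, hσ0, hj] using h2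
        · simp [Equiv.Perm.mul_apply, Equiv.swap_apply_of_ne_of_ne,
            (by decide : (2 : Fin 3) ≠ 0), (by decide : (2 : Fin 3) ≠ 1), hrefl]
      · simpa [Equiv.Perm.mul_apply, hσ0, hj] using h1s
    · -- σ 2 = a : swap agents 0 and 2, uses R 2 b a
      apply hσPO
      refine ⟨σ * Equiv.swap 0 2, ?_, 0, ?_⟩
      · intro i
        fin_cases i
        · simpa [Equiv.Perm.mul_apply, hσ0, hj] using h1
        · simp [Equiv.Perm.mul_apply, Equiv.swap_apply_of_ne_of_ne,
            (by decide : (1 : Fin 3) ≠ 0), (by decide : (1 : Fin 3) ≠ 2), hrefl]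
        · simpa [Equiv.Perm.mul_apply, hσ0, hj] using hba
      · simpa [Equiv.Perm.mul_apply, hσ0, hj] using h1s
  have h2ab : R 2 a b := ((hR 2).1 a b).resolve_right h2ba
  -- Step 2: contradiction from τ
  obtain ⟨j, hj⟩ := τ.surjective b
  rcases show j = 0 ∨ j = 1 ∨ j = 2 by omega with rfl | rfl | rfl
  · -- τ 0 = b : swap agents 0 and 1
    apply hτPO
    refine ⟨τ * Equiv.swap 0 1, ?_, 0, ?_⟩
    · intro i
      fin_cases i
      · simpa [Equiv.Perm.mul_apply, hτ1, hj] using h1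
      · simpa [Equiv.Perm.mul_apply, hτ1, hj] using h2
      · simp [Equiv.Perm.mul_apply, Equiv.swap_apply_of_ne_of_ne,
          (by decide : (2 : Fin 3) ≠ 0), (by decide : (2 : Fin 3) ≠ 1), hrefl]
    · simpa [Equiv.Perm.mul_apply, hτ1, hj] using h1s
  · exact hab (hτ1.symm.trans hj)
  · -- τ 2 = b : swap agents 1 and 2
    apply hτPO
    refine ⟨τ * Equiv.swap 1 2, ?_, 2, ?_⟩
    · intro i
      fin_cases i
      · simp [Equiv.Perm.mul_apply, Equiv.swap_apply_of_ne_of_ne,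
          (by decide : (0 : Fin 3) ≠ 1), (by decide : (0 : Fin 3) ≠ 2), hrefl]
      · simpa [Equiv.Perm.mul_apply, hτ1, hj] using h2
      · simpa [Equiv.Perm.mul_apply, hτ1, hj] using h2ab
    · simpa [Equiv.Perm.mul_apply, hτ1, hj] using h2ba
end

section
/- No ex post efficient random assignment on 3 agents and 3 objects admits a trading cycle of size three with distinct agents and distinct objects. -/
open Finset
open scoped Classical

section Aux

/-- A permutation of `Fin 3` from an injective vector. -/
noncomputable def mkPerm (v : Fin 3 → Fin 3) (hv : Function.Injective v) :
    Equiv.Perm (Fin 3) :=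
  Equiv.ofBijective v (Finite.injective_iff_bijective.mp hv)

@[simp] lemma mkPerm_apply (v : Fin 3 → Fin 3) (hv : Function.Injective v) (x : Fin 3) :
    mkPerm v hv x = v x := rfl

lemma inj3 {x y z : Fin 3} (hxy : x ≠ y) (hxz : x ≠ z) (hyz : y ≠ z) :
    Function.Injective ![x, y, z] := by
  intro i j hij
  fin_cases i <;> fin_cases j <;> simp_all

lemma exists_PO {n : ℕ} {R : Fin n → Fin n → Fin n → Prop} {p : Fin n → Fin n → ℝ}
    (hpe : ExPostEfficient R p) (i o : Fin n) (h : 0 < p i o) :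
    ∃ σ : Equiv.Perm (Fin n), ParetoOptimalPerm R σ ∧ σ i = o := by
  obtain ⟨w, hw0, -, hwPO, hwp⟩ := hpe
  rw [hwp] at h
  obtain ⟨σ, -, hσ⟩ := Finset.exists_lt_of_sum_lt (s := Finset.univ)
    (f := fun _ => (0 : ℝ)) (by simpa using h)
  refine ⟨σ, hwPO σ ?_, ?_⟩
  · intro h0; rw [h0] at hσ; simp at hσ
  · by_contra hne; simp [permMatrix, hne] at hσ

lemma dominate {R : Fin 3 → Fin 3 → Fin 3 → Prop} {σ : Equiv.Perm (Fin 3)}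
    (hPO : ParetoOptimalPerm R σ) (x y z : Fin 3)
    (hxy : x ≠ y) (hxz : x ≠ z) (hyz : y ≠ z)
    (h0 : R 0 x (σ 0)) (h1 : R 1 y (σ 1)) (h2 : R 2 z (σ 2))
    (hstr : ¬ R 0 (σ 0) x ∨ ¬ R 1 (σ 1) y ∨ ¬ R 2 (σ 2) z) : False := by
  refine hPO ⟨mkPerm ![x, y, z] (inj3 hxy hxz hyz), ?_, ?_⟩
  · intro i; fin_cases i
    · simpa using h0
    · simpa using h1
    · simpa using h2
  · rcases hstr with h | h | h
    exacts [⟨0, by simpa using h⟩, ⟨1, by simpa using h⟩, ⟨2, by simpa using h⟩]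

end Aux

/-- No ex post efficient random assignment on 3 agents and 3 objects admits
a trading cycle of size three `c, 1, a, 2, b, 3` with distinct agents and objects. -/
theorem stmt11 (R : Fin 3 → Fin 3 → Fin 3 → Prop) (hR : ∀ i, IsPref (R i))
    (p : Fin 3 → Fin 3 → ℝ) (hp : IsRandomAssignment p)
    (hpe : ExPostEfficient R p)
    (a b c : Fin 3) (hab : a ≠ b) (hac : a ≠ c) (hbc : b ≠ c)
    (h1c : 0 < p 0 c) (h2a : 0 < p 1 a) (h3b : 0 < p 2 b)
    (h1 : R 0 a c) (h2 : R 1 b a) (h3 : R 2 c b)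
    (hstrict : ¬ R 0 c a ∨ ¬ R 1 a b ∨ ¬ R 2 b c) : False := by
  obtain ⟨σ1, hσ1PO, hσ1⟩ := exists_PO hpe 0 c h1c
  obtain ⟨σ2, hσ2PO, hσ2⟩ := exists_PO hpe 1 a h2a
  obtain ⟨σ3, hσ3PO, hσ3⟩ := exists_PO hpe 2 b h3b
  have habc : ∀ x : Fin 3, x = a ∨ x = b ∨ x = c := by
    intro x
    by_contra hx
    push_neg at hx
    obtain ⟨hxa, hxb, hxc⟩ := hx
    have h4 : ({x, a, b, c} : Finset (Fin 3)).card = 4 := by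
      rw [Finset.card_insert_of_notMem (by simp [hxa, hxb, hxc]),
        Finset.card_insert_of_notMem (by simp [hab, hac]),
        Finset.card_insert_of_notMem (by simp [hbc]), Finset.card_singleton]
    have hle := Finset.card_le_univ ({x, a, b, c} : Finset (Fin 3))
    rw [h4] at hle
    simp at hle
  have tot : ∀ i x y, R i x y ∨ R i y x := fun i x y => (hR i).1 x y
  have rfl_ : ∀ i x, R i x x := fun i x => ((hR i).1 x x).elim id id
  have t0 : ∀ {x y z}, R 0 x y → R 0 y z → R 0 x z := fun h h' => (hR 0).2 h h'
  have t1 : ∀ {x y z}, R 1 x y → R 1 y z → R 1 x z := fun h h' => (hR 1).2 h h'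
  have t2 : ∀ {x y z}, R 2 x y → R 2 y z → R 2 x z := fun h h' => (hR 2).2 h h'
  have aligned : ∀ σ : Equiv.Perm (Fin 3), ParetoOptimalPerm R σ →
      σ 0 = c → σ 1 = a → σ 2 = b → False := by
    intro σ hPO e0 e1 e2
    refine dominate hPO a b c hab hac hbc (by rw [e0]; exact h1) (by rw [e1]; exact h2)
      (by rw [e2]; exact h3) ?_
    rcases hstrict with h | h | h
    exacts [Or.inl (by rw [e0]; exact h), Or.inr (Or.inl (by rw [e1]; exact h)),
      Or.inr (Or.inr (by rw [e2]; exact h))]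
  -- determine σ1 : σ1 0 = c, so σ1 1 = a (aligned) or σ1 1 = b
  rcases habc (σ1 1) with e11 | e11 | e11
  · -- σ1 1 = a, hence σ1 2 = b : aligned
    have e12 : σ1 2 = b := by
      rcases habc (σ1 2) with e | e | e
      · exact absurd (σ1.injective (e.trans e11.symm)) (by decide)
      · exact e
      · exact absurd (σ1.injective (e.trans hσ1.symm)) (by decide)
    exact aligned σ1 hσ1PO hσ1 e11 e12
  · -- σ1 1 = b, hence σ1 2 = a
    have e12 : σ1 2 = a := by
      rcases habc (σ1 2) with e | e | e
      · exact e
      · exact absurd (σ1.injective (e.trans e11.symm)) (by decide)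
      · exact absurd (σ1.injective (e.trans hσ1.symm)) (by decide)
    -- determine σ2 : σ2 1 = a
    rcases habc (σ2 0) with e20 | e20 | e20
    · exact absurd (σ2.injective (e20.trans hσ2.symm)) (by decide)
    · -- σ2 0 = b, hence σ2 2 = c
      have e22 : σ2 2 = c := by
        rcases habc (σ2 2) with e | e | e
        · exact absurd (σ2.injective (e.trans hσ2.symm)) (by decide)
        · exact absurd (σ2.injective (e.trans e20.symm)) (by decide)
        · exact e
      -- determine σ3 : σ3 2 = b
      rcases habc (σ3 0) with e30 | e30 | e30
      · -- σ3 0 = a, hence σ3 1 = c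
        have e31 : σ3 1 = c := by
          rcases habc (σ3 1) with e | e | e
          · exact absurd (σ3.injective (e.trans e30.symm)) (by decide)
          · exact absurd (σ3.injective (e.trans hσ3.symm)) (by decide)
          · exact e
        -- Hard case: σ1 = (c,b,a), σ2 = (b,a,c), σ3 = (a,c,b)
        rcases hstrict with hs | hs | hs
        · -- ¬ R 0 c a
          by_cases hA : R 2 c a
          · exact dominate hσ1PO a b c hab hac hbc (by rw [hσ1]; exact h1)
              (by rw [e11]; exact rfl_ 1 b) (by rw [e12]; exact hA)
              (Or.inl (by rw [hσ1]; exact hs))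
          · have hac2 : R 2 a c := (tot 2 c a).resolve_left hA
            by_cases hB : R 1 c a
            · exact dominate hσ2PO b c a hbc hab.symm hac.symm
                (by rw [e20]; exact rfl_ 0 b) (by rw [hσ2]; exact hB)
                (by rw [e22]; exact hac2) (Or.inr (Or.inr (by rw [e22]; exact hA)))
            · have h1ac : R 1 a c := (tot 1 c a).resolve_left hB
              have h1bc : R 1 b c := t1 h2 h1ac
              have hncb : ¬ R 1 c b := fun h => hB (t1 h h2)
              exact dominate hσ3PO a b c hab hac hbc (by rw [e30]; exact rfl_ 0 a)
                (by rw [e31]; exact h1bc) (by rw [hσ3]; exact h3)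
                (Or.inr (Or.inl (by rw [e31]; exact hncb)))
        · -- ¬ R 1 a b
          by_cases hA : R 0 a b
          · exact dominate hσ2PO a b c hab hac hbc (by rw [e20]; exact hA)
              (by rw [hσ2]; exact h2) (by rw [e22]; exact rfl_ 2 c)
              (Or.inr (Or.inl (by rw [hσ2]; exact hs)))
          · have h0ba : R 0 b a := (tot 0 a b).resolve_left hA
            by_cases hB : R 2 a b
            · exact dominate hσ3PO b c a hbc hab.symm hac.symm
                (by rw [e30]; exact h0ba) (by rw [e31]; exact rfl_ 1 c)
                (by rw [hσ3]; exact hB) (Or.inl (by rw [e30]; exact hA))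
            · have h2ba : R 2 b a := (tot 2 a b).resolve_left hB
              have h2ca : R 2 c a := t2 h3 h2ba
              have hnac : ¬ R 2 a c := fun h => hB (t2 h h3)
              exact dominate hσ1PO a b c hab hac hbc (by rw [hσ1]; exact h1)
                (by rw [e11]; exact rfl_ 1 b) (by rw [e12]; exact h2ca)
                (Or.inr (Or.inr (by rw [e12]; exact hnac)))
        · -- ¬ R 2 b c
          by_cases hA : R 1 b c
          · exact dominate hσ3PO a b c hab hac hbc (by rw [e30]; exact rfl_ 0 a)
              (by rw [e31]; exact hA) (by rw [hσ3]; exact h3)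
              (Or.inr (Or.inr (by rw [hσ3]; exact hs)))
          · have h1cb : R 1 c b := (tot 1 b c).resolve_left hA
            by_cases hB : R 0 b c
            · exact dominate hσ1PO b c a hbc hab.symm hac.symm
                (by rw [hσ1]; exact hB) (by rw [e11]; exact h1cb)
                (by rw [e12]; exact rfl_ 2 a) (Or.inr (Or.inl (by rw [e11]; exact hA)))
            · have h0cb : R 0 c b := (tot 0 b c).resolve_left hB
              have h0ab : R 0 a b := t0 h1 h0cb
              have hnba : ¬ R 0 b a := fun h => hB (t0 h h1)
              exact dominate hσ2PO a b c hab hac hbc (by rw [e20]; exact h0ab)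
                (by rw [hσ2]; exact h2) (by rw [e22]; exact rfl_ 2 c)
                (Or.inl (by rw [e20]; exact hnba))
      · exact absurd (σ3.injective (e30.trans hσ3.symm)) (by decide)
      · -- σ3 0 = c, hence σ3 1 = a : aligned
        have e31 : σ3 1 = a := by
          rcases habc (σ3 1) with e | e | e
          · exact e
          · exact absurd (σ3.injective (e.trans hσ3.symm)) (by decide)
          · exact absurd (σ3.injective (e.trans e30.symm)) (by decide)
        exact aligned σ3 hσ3PO e30 e31 hσ3
    · -- σ2 0 = c, hence σ2 2 = b : aligned
      have e22 : σ2 2 = b := by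
        rcases habc (σ2 2) with e | e | e
        · exact absurd (σ2.injective (e.trans hσ2.symm)) (by decide)
        · exact e
        · exact absurd (σ2.injective (e.trans e20.symm)) (by decide)
      exact aligned σ2 hσ2PO e20 hσ2 e22
  · exact absurd (σ1.injective (e11.trans hσ1.symm)) (by decide)
end

section
/- A discrete assignment (viewed as a 0-1 random assignment) is Pareto optimal with respect to the agents' preferences if and only if it is SD-efficient. -/
open Finset
open scoped Classical

lemma sum_perm_row {n : ℕ} (τ : Equiv.Perm (Fin n)) (i : Fin n) (F : Finset (Fin n)) :
    ∑ o ∈ F, permMatrix τ i o = if τ i ∈ F then 1 else 0 := by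
  simp [permMatrix, Finset.sum_ite_eq]

lemma permMatrix_isRA {n : ℕ} (τ : Equiv.Perm (Fin n)) :
    IsRandomAssignment (permMatrix τ) := by
  refine ⟨fun i o => by unfold permMatrix; split <;> norm_num, fun i => ?_, fun o => ?_⟩
  · simp [permMatrix, Finset.sum_ite_eq]
  · have h : ∀ i : Fin n, permMatrix τ i o = if i = τ.symm o then 1 else 0 := by
      intro i; unfold permMatrix
      congr 1
      simp [Equiv.apply_eq_iff_eq_symm_apply]
    simp only [h]
    simp [Finset.sum_ite_eq']

/-- A discrete assignment is Pareto optimal iff it is SD-efficient. -/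
theorem stmt13 {n : ℕ} (R : Fin n → Fin n → Fin n → Prop) (hR : ∀ i, IsPref (R i))
    (σ : Equiv.Perm (Fin n)) :
    ParetoOptimalPerm R σ ↔ SDEfficient R (permMatrix σ) := by
  have refl : ∀ i a, R i a a := fun i a => ((hR i).1 a a).elim id id
  constructor
  · -- Pareto optimal → SD-efficient
    intro hPO
    rintro ⟨q, ⟨hq0, hqrow, hqcol⟩, hge, i₀, hgt⟩
    -- support lemma : positive entries are weakly preferred to σ i
    have hsupp : ∀ i o, 0 < q i o → R i o (σ i) := by
      intro i o hpos
      by_contra hno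
      have h1 := hge i (σ i)
      rw [sum_perm_row] at h1
      have hmem : σ i ∈ univ.filter (fun o' => R i o' (σ i)) := by
        simp [refl i (σ i)]
      rw [if_pos hmem] at h1
      have hsplit := Finset.sum_filter_add_sum_filter_not univ
        (fun o' => R i o' (σ i)) (q i)
      have hrow := hqrow i
      have hcompl : q i o ≤ ∑ o' ∈ univ.filter (fun o' => ¬ R i o' (σ i)), q i o' := by
        apply Finset.single_le_sum (fun o' _ => hq0 i o')
        simp [hno]
      linarith
    -- strict agent: some object in support strictly preferred
    obtain ⟨o₁, ho₁pos, ho₁str⟩ : ∃ o₁, 0 < q i₀ o₁ ∧ ¬ R i₀ (σ i₀) o₁ := by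
      have hns := hgt.2
      rw [SDge] at hns
      push_neg at hns
      obtain ⟨o, ho⟩ := hns
      rw [sum_perm_row] at ho
      have hle1 : ∑ o' ∈ univ.filter (fun o' => R i₀ o' o), q i₀ o' ≤ 1 := by
        rw [← hqrow i₀]
        exact Finset.sum_le_sum_of_subset_of_nonneg (Finset.filter_subset _ _)
          (fun o' _ _ => hq0 i₀ o')
      have hnot : σ i₀ ∉ univ.filter (fun o' => R i₀ o' o) := by
        intro h; rw [if_pos h] at ho; linarith
      rw [if_neg hnot] at ho
      have hnRo : ¬ R i₀ (σ i₀) o := by simpa using hnot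
      have : ∃ o' ∈ univ.filter (fun o' => R i₀ o' o), 0 < q i₀ o' := by
        by_contra hc
        push_neg at hc
        have : ∑ o' ∈ univ.filter (fun o' => R i₀ o' o), q i₀ o' = 0 :=
          Finset.sum_eq_zero fun o' ho' => le_antisymm (hc o' ho') (hq0 i₀ o')
        linarith
      obtain ⟨o₁, ho₁mem, ho₁pos⟩ := this
      have hRo₁o : R i₀ o₁ o := by simpa using ho₁mem
      exact ⟨o₁, ho₁pos, fun h => hnRo ((hR i₀).2 h hRo₁o)⟩
    -- Hall's theorem setup
    set t : Fin n → Finset (Fin n) := fun i =>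
      if i = i₀ then univ.filter (fun o => 0 < q i₀ o ∧ ¬ R i₀ (σ i₀) o)
      else univ.filter (fun o => 0 < q i o) with ht
    have hall : ∀ s : Finset (Fin n), s.card ≤ (s.biUnion t).card := by
      intro s
      set N := s.biUnion t with hN
      -- the mass each agent in s eats, restricted to N
      have hlow : ∀ i ∈ s, ∑ o ∈ t i, q i o ≤ ∑ o ∈ N, q i o := by
        intro i hi
        exact Finset.sum_le_sum_of_subset_of_nonneg
          (Finset.subset_biUnion_of_mem t hi) (fun o _ _ => hq0 i o)
      have hti : ∀ i, i ≠ i₀ → ∑ o ∈ t i, q i o = 1 := by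
        intro i hi
        rw [ht]
        simp only [if_neg hi]
        rw [Finset.sum_filter_of_ne (fun o _ h => lt_of_le_of_ne (hq0 i o) (Ne.symm h))]
        exact hqrow i
      have hti₀ : 0 < q i₀ o₁ ∧ o₁ ∈ t i₀ := by
        constructor
        · exact ho₁pos
        · rw [ht]; simp [ho₁pos, ho₁str]
      have hti₀' : q i₀ o₁ ≤ ∑ o ∈ t i₀, q i₀ o :=
        Finset.single_le_sum (fun o _ => hq0 i₀ o) hti₀.2
      have hupper : ∑ i ∈ s, ∑ o ∈ N, q i o ≤ (N.card : ℝ) := by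
        rw [Finset.sum_comm]
        calc ∑ o ∈ N, ∑ i ∈ s, q i o ≤ ∑ o ∈ N, (1 : ℝ) := by
              apply Finset.sum_le_sum
              intro o _
              rw [← hqcol o]
              exact Finset.sum_le_sum_of_subset_of_nonneg (Finset.subset_univ s)
                (fun i _ _ => hq0 i o)
          _ = N.card := by simp
      have hlower : (s.card : ℝ) - 1 < ∑ i ∈ s, ∑ o ∈ N, q i o := by
        by_cases hi₀ : i₀ ∈ s
        · have hsplit := Finset.add_sum_erase s (fun i => ∑ o ∈ N, q i o) hi₀
          have h1 : (s.erase i₀).card = s.card - 1 := Finset.card_erase_of_mem hi₀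
          have h2 : ((s.erase i₀).card : ℝ) ≤ ∑ i ∈ s.erase i₀, ∑ o ∈ N, q i o := by
            calc ((s.erase i₀).card : ℝ) = ∑ i ∈ s.erase i₀, (1:ℝ) := by simp
              _ ≤ _ := by
                  apply Finset.sum_le_sum
                  intro i hi
                  have hne : i ≠ i₀ := Finset.ne_of_mem_erase hi
                  calc (1:ℝ) = ∑ o ∈ t i, q i o := (hti i hne).symm
                    _ ≤ _ := hlow i (Finset.mem_of_mem_erase hi)
          have h3 : 0 < ∑ o ∈ N, q i₀ o := lt_of_lt_of_le ho₁pos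
            (le_trans hti₀' (hlow i₀ hi₀))
          have hcard : ((s.erase i₀).card : ℝ) = (s.card : ℝ) - 1 := by
            rw [h1]
            have : 1 ≤ s.card := Finset.card_pos.mpr ⟨i₀, hi₀⟩
            push_cast [this]
            ring
          linarith
        · have : (s.card : ℝ) ≤ ∑ i ∈ s, ∑ o ∈ N, q i o := by
            calc (s.card : ℝ) = ∑ i ∈ s, (1:ℝ) := by simp
              _ ≤ _ := by
                  apply Finset.sum_le_sum
                  intro i hi
                  have hne : i ≠ i₀ := fun h => hi₀ (h ▸ hi)
                  calc (1:ℝ) = ∑ o ∈ t i, q i o := (hti i hne).symm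
                    _ ≤ _ := hlow i hi
          linarith
      have : (s.card : ℝ) < (N.card : ℝ) + 1 := by linarith
      have := Nat.lt_add_one_iff.mp (by exact_mod_cast this)
      exact this
    obtain ⟨f, hfinj, hf⟩ :=
      (Finset.all_card_le_biUnion_card_iff_existsInjective' t).mp hall
    have hfbij : Function.Bijective f := (Finite.injective_iff_bijective).mp hfinj
    let τ : Equiv.Perm (Fin n) := Equiv.ofBijective f hfbij
    apply hPO
    refine ⟨τ, ?_, i₀, ?_⟩
    · intro i
      have hmem := hf i
      have hpos : 0 < q i (f i) := by
        rw [ht] at hmem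
        by_cases h : i = i₀
        · subst h; simp at hmem; tauto
        · simp only [if_neg h, Finset.mem_filter] at hmem; exact hmem.2
      exact hsupp i (f i) hpos
    · have hmem := hf i₀
      rw [ht] at hmem
      simp at hmem
      exact hmem.2
  · -- SD-efficient → Pareto optimal
    intro hSD
    rintro ⟨τ, hw, i₁, hstr⟩
    apply hSD
    refine ⟨permMatrix τ, permMatrix_isRA τ, ?_, i₁, ?_, ?_⟩
    · intro i o
      rw [sum_perm_row, sum_perm_row]
      by_cases h : σ i ∈ univ.filter (fun o' => R i o' o)
      · have h' : τ i ∈ univ.filter (fun o' => R i o' o) := by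
          simp only [Finset.mem_filter, Finset.mem_univ, true_and] at h ⊢
          exact (hR i).2 (hw i) h
        rw [if_pos h, if_pos h']
      · rw [if_neg h]
        split <;> norm_num
    · intro o
      rw [sum_perm_row, sum_perm_row]
      by_cases h : σ i₁ ∈ univ.filter (fun o' => R i₁ o' o)
      · have h' : τ i₁ ∈ univ.filter (fun o' => R i₁ o' o) := by
          simp only [Finset.mem_filter, Finset.mem_univ, true_and] at h ⊢
          exact (hR i₁).2 (hw i₁) h
        rw [if_pos h, if_pos h']
      · rw [if_neg h]
        split <;> norm_num
    · intro hcon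
      have := hcon (τ i₁)
      rw [sum_perm_row, sum_perm_row] at this
      have h1 : τ i₁ ∈ univ.filter (fun o' => R i₁ o' (τ i₁)) := by
        simp [refl i₁ (τ i₁)]
      have h2 : σ i₁ ∉ univ.filter (fun o' => R i₁ o' (τ i₁)) := by
        simpa using hstr
      rw [if_pos h1, if_neg h2] at this
      linarith
end
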